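/- arXiv:2502.05520 — 6 statements merged into one kernel-verified Lean document; each statement's English description precedes it below -/
import Mathlib

section
/- Let c be a positive integer and let λ ≥ 1 be a real number. Let G be a finite simple graph that is μ-bounded with parameter c and whose smallest adjacency eigenvalue satisfies λ_min(G) ≥ −λ. Then every vertex x of G is contained in a maximal clique of G whose order is at least (d(x) − (⌊λ²⌋ choose 2)·(c−1))/⌊λ²⌋ + 1. -/
/-!
Let `I` be a largest independent set inside the neighbourhood `N(x)`. The quadratic form of the
adjacency matrix at `λ e_x - 𝟙_I` equals `-2λ|I|` while `‖λ e_x - 𝟙_I‖² = λ² + |I|`, so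
`λ_min ≥ -λ` forces `|I| ≤ ⌊λ²⌋`. By maximality every vertex of `N(x)` lies in or sees `I`.
A vertex seeing two vertices `a ≠ b` of `I` is a common neighbour of the non-adjacent pair
`a, b` other than `x`, so there are at most `C(|I|, 2)(c - 1)` of them. Every other vertex of
`N(x)` is a private neighbour of a single `y ∈ I`, and the private neighbours of `y` form a
clique, since two non-adjacent ones could replace `y` in `I`. Hence some `y` has at least
`(d(x) - C(|I|, 2)(c - 1)) / |I|` private neighbours; together with `x` they form a clique, which
extends to a maximal one, and the bound only decreases when `|I|` is replaced by `⌊λ²⌋`.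
-/

open Finset

/-- `G` is μ-bounded with parameter `c`: every pair of distinct non-adjacent vertices
has at most `c` common neighbors. -/
def MuBounded {V : Type*} [Fintype V] [DecidableEq V] (G : SimpleGraph V)
    [DecidableRel G.Adj] (c : ℕ) : Prop :=
  ∀ u v : V, u ≠ v → ¬ G.Adj u v →
    ((G.neighborFinset u) ∩ (G.neighborFinset v)).card ≤ c

/-- `s` is a maximal clique of `G`. -/
def IsMaximalCliqueF {V : Type*} (G : SimpleGraph V) (s : Finset V) : Prop :=
  G.IsClique (s : Set V) ∧ ∀ t : Finset V, G.IsClique (t : Set V) → s ⊆ t → s = t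

/-- Every (real) eigenvalue of the adjacency matrix of `G` is at least `r`,
i.e. `λ_min(G) ≥ r`. -/
def MinEigGE {V : Type*} [Fintype V] [DecidableEq V] (G : SimpleGraph V)
    [DecidableRel G.Adj] (r : ℝ) : Prop :=
  ∀ μ ∈ spectrum ℝ (G.adjMatrix ℝ), r ≤ μ

open Matrix

theorem Matrix.IsHermitian.mul_dotProduct_self_le_dotProduct_mulVec {n : Type*} [Fintype n]
    [DecidableEq n] {A : Matrix n n ℝ} (hA : A.IsHermitian) {r : ℝ}
    (hr : ∀ μ ∈ spectrum ℝ A, r ≤ μ) (z : n → ℝ) :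
    r * (z ⬝ᵥ z) ≤ z ⬝ᵥ (A *ᵥ z) := by
  have hB : (A - algebraMap ℝ _ r).IsHermitian :=
    hA.sub ((IsSelfAdjoint.all r).algebraMap _).isHermitian
  have hpsd : (A - algebraMap ℝ _ r).PosSemidef := by
    refine hB.posSemidef_iff_eigenvalues_nonneg.2 fun i ↦ ?_
    have hi := hB.eigenvalues_mem_spectrum_real i
    rw [← spectrum.sub_singleton_eq] at hi
    obtain ⟨μ, hμ, r, rfl, hμr⟩ := hi
    simpa [← hμr] using hr μ hμ
  have := hpsd.dotProduct_mulVec_nonneg z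
  simp only [star_trivial, sub_mulVec, Algebra.algebraMap_eq_smul_one, smul_mulVec, one_mulVec,
    dotProduct_sub, dotProduct_smul, smul_eq_mul] at this
  linarith

namespace SimpleGraph

variable {V : Type*} (G : SimpleGraph V)

structure IsMaximumIndepSubset (s I : Finset V) : Prop where
  subset : I ⊆ s
  isIndepSet : G.IsIndepSet (I : Set V)
  card_le_of_isIndepSet : ∀ J ⊆ s, G.IsIndepSet (J : Set V) → #J ≤ #I

theorem exists_isMaximumIndepSubset (s : Finset V) : ∃ I, G.IsMaximumIndepSubset s I := by
  classical
  obtain ⟨I, hI, hmax⟩ := exists_max_image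
    (s.powerset.filter fun J : Finset V ↦ G.IsIndepSet (J : Set V)) card ⟨∅, by simp⟩
  simp only [mem_filter, mem_powerset] at hI
  exact ⟨I, hI.1, hI.2, fun J hJs hJ ↦ hmax J (by simp [hJs, hJ])⟩

theorem exists_isMaximalCliqueF_superset [Finite V] {s : Finset V}
    (hs : G.IsClique (s : Set V)) : ∃ t, IsMaximalCliqueF G t ∧ s ⊆ t := by
  obtain ⟨t, hst, ht⟩ :=
    Finite.exists_le_maximal (p := fun t : Finset V ↦ G.IsClique (t : Set V)) hs
  exact ⟨t, ⟨ht.prop, fun u hu htu ↦ le_antisymm htu (ht.2 hu htu)⟩, hst⟩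

variable {G} {s I : Finset V}

theorem IsMaximumIndepSubset.exists_eq_or_adj (hI : G.IsMaximumIndepSubset s I) {u : V}
    (hu : u ∈ s) : ∃ y ∈ I, u = y ∨ G.Adj u y := by
  classical
  by_contra! h
  have hJ : G.IsIndepSet (insert u I : Set V) :=
    hI.isIndepSet.insert fun y hy _ ↦ ⟨(h y hy).2, fun hyu ↦ (h y hy).2 hyu.symm⟩
  have := hI.card_le_of_isIndepSet (insert u I) (insert_subset hu hI.subset) (by simpa using hJ)
  rw [card_insert_of_notMem fun huI ↦ (h u huI).1 rfl] at this
  omega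

variable [DecidableEq V] [DecidableRel G.Adj]

variable (G) in
/-- The vertices of `s` whose closed neighbourhood meets `I` exactly in `{y}`. -/
def privateNeighbors (s I : Finset V) (y : V) : Finset V :=
  {u ∈ s | ∀ w ∈ I, u = w ∨ G.Adj u w ↔ w = y}

theorem privateNeighbors_subset (y : V) : G.privateNeighbors s I y ⊆ s := filter_subset _ _

theorem IsMaximumIndepSubset.isClique_privateNeighbors (hI : G.IsMaximumIndepSubset s I)
    {y : V} (hy : y ∈ I) : G.IsClique (G.privateNeighbors s I y : Set V) := by
  have hnadj {u w : V} (hu : u ∈ G.privateNeighbors s I y) (hw : w ∈ I) (hwy : w ≠ y) :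
      ¬G.Adj u w := fun h ↦ hwy (((mem_filter.1 hu).2 w hw).1 (.inr h))
  have hadj {u : V} (hu : u ∈ G.privateNeighbors s I y) (huy : u ≠ y) : G.Adj u y :=
    (((mem_filter.1 hu).2 y hy).2 rfl).resolve_left huy
  have hnotMem {u : V} (hu : u ∈ G.privateNeighbors s I y) (huy : u ≠ y) : u ∉ I :=
    fun huI ↦ huy (((mem_filter.1 hu).2 u huI).1 (.inl rfl))
  have hfar {u w : V} (hu : u ∈ G.privateNeighbors s I y) (hw : w ∈ I.erase y) :
      ¬G.Adj u w ∧ ¬G.Adj w u :=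
    ⟨hnadj hu (mem_of_mem_erase hw) (ne_of_mem_erase hw),
      fun h ↦ hnadj hu (mem_of_mem_erase hw) (ne_of_mem_erase hw) h.symm⟩
  intro a ha b hb hab
  by_contra hab'
  have hay : a ≠ y := by rintro rfl; exact hab' (hadj hb hab.symm).symm
  have hby : b ≠ y := by rintro rfl; exact hab' (hadj ha hab)
  -- replacing `y` by the two non-adjacent vertices `a`, `b` enlarges `I`
  have hJ : G.IsIndepSet ((insert a (insert b (I.erase y)) : Finset V) : Set V) := by
    rw [coe_insert, coe_insert]
    refine (Set.Pairwise.insert ?_ fun w hw _ ↦ hfar hb hw).insert fun w hw _ ↦ ?_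
    · exact hI.isIndepSet.mono (coe_subset.2 (erase_subset y I))
    · rcases hw with rfl | hw
      · exact ⟨hab', fun h ↦ hab' h.symm⟩
      · exact hfar ha hw
  have hJs : insert a (insert b (I.erase y)) ⊆ s :=
    insert_subset (mem_filter.1 ha).1 <| insert_subset (mem_filter.1 hb).1 <|
      (erase_subset y I).trans hI.subset
  have hcard := hI.card_le_of_isIndepSet _ hJs hJ
  rw [card_insert_of_notMem, card_insert_of_notMem, card_erase_of_mem hy] at hcard
  · have := card_pos.2 ⟨y, hy⟩
    omega
  · exact fun h ↦ hnotMem hb hby (mem_of_mem_erase h)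
  · simp only [mem_insert, mem_erase, not_or]
    exact ⟨hab, fun h ↦ hnotMem ha hay h.2⟩

theorem IsMaximumIndepSubset.card_le_sum_add_sum_card_privateNeighbors
    (hI : G.IsMaximumIndepSubset s I) :
    #s ≤ ∑ p ∈ I.powersetCard 2, #{u ∈ s | ∀ w ∈ p, G.Adj u w} +
      ∑ y ∈ I, #(G.privateNeighbors s I y) := by
  refine (card_le_card fun u hu ↦ ?_).trans <| (card_union_le _ _).trans <|
    add_le_add (card_biUnion_le (s := I.powersetCard 2)) (card_biUnion_le (s := I))
  simp only [mem_union, mem_biUnion, mem_powersetCard]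
  by_cases h : ∃ a ∈ I, ∃ b ∈ I, a ≠ b ∧ G.Adj u a ∧ G.Adj u b
  · obtain ⟨a, ha, b, hb, hab, hua, hub⟩ := h
    exact .inl ⟨{a, b}, ⟨insert_subset ha (singleton_subset_iff.2 hb), card_pair hab⟩,
      mem_filter.2 ⟨hu, by simp [hua, hub]⟩⟩
  push Not at h
  obtain ⟨y, hy, huy⟩ := hI.exists_eq_or_adj hu
  refine .inr ⟨y, hy, mem_filter.2 ⟨hu, fun w hw ↦ ⟨fun huw ↦ ?_, fun hwy ↦ hwy ▸ huy⟩⟩⟩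
  by_contra hwy
  rcases huw with rfl | huw <;> rcases huy with rfl | huy
  · exact hwy rfl
  · exact hI.isIndepSet hw hy hwy huy
  · exact hI.isIndepSet hy hw (Ne.symm hwy) huw
  · exact h w hw y hy hwy huw huy

variable [Fintype V] {c : ℕ}

theorem _root_.MuBounded.card_filter_adj_adj_le (hmu : MuBounded G c) {x a b : V}
    (hab : a ≠ b) (hnadj : ¬G.Adj a b) (hxa : G.Adj x a) (hxb : G.Adj x b) :
    #{u ∈ G.neighborFinset x | G.Adj u a ∧ G.Adj u b} ≤ c - 1 := by
  have hsub : {u ∈ G.neighborFinset x | G.Adj u a ∧ G.Adj u b} ⊆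
      (G.neighborFinset a ∩ G.neighborFinset b).erase x := fun u hu ↦ by
    simp only [mem_filter, mem_neighborFinset] at hu
    simp [hu.1.ne', hu.2.1.symm, hu.2.2.symm]
  have := card_le_card hsub
  rw [card_erase_of_mem (by simp [hxa.symm, hxb.symm])] at this
  have := hmu a b hab hnadj
  omega

theorem _root_.MuBounded.exists_isClique_degree_le (hmu : MuBounded G c) {x : V}
    {I : Finset V} (hI : G.IsMaximumIndepSubset (G.neighborFinset x) I) :
    ∃ K : Finset V, G.IsClique (K : Set V) ∧ x ∈ K ∧
      G.degree x ≤ (#I).choose 2 * (c - 1) + #I * (#K - 1) := by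
  have hcount := hI.card_le_sum_add_sum_card_privateNeighbors
  rw [card_neighborFinset_eq_degree] at hcount
  rcases I.eq_empty_or_nonempty with rfl | hne
  · exact ⟨{x}, by simp, mem_singleton_self x, by
    simpa [powersetCard_eq_empty.2 (by simp : #(∅ : Finset V) < 2)] using hcount⟩
  obtain ⟨y, hy, hmax⟩ :=
    exists_max_image I (fun y ↦ #(G.privateNeighbors (G.neighborFinset x) I y)) hne
  have hE {u : V} (hu : u ∈ G.privateNeighbors (G.neighborFinset x) I y) : G.Adj x u :=
    (mem_neighborFinset G x u).1 (privateNeighbors_subset y hu)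
  refine ⟨insert x (G.privateNeighbors (G.neighborFinset x) I y), ?_, mem_insert_self _ _, ?_⟩
  · rw [coe_insert, isClique_insert]
    exact ⟨hI.isClique_privateNeighbors hy, fun u hu _ ↦ hE hu⟩
  · rw [card_insert_of_notMem fun h ↦ G.loopless.irrefl x (hE h), Nat.add_sub_cancel]
    refine hcount.trans (add_le_add ?_ (by simpa using sum_le_card_nsmul _ _ _ hmax))
    rw [← card_powersetCard, ← smul_eq_mul]
    refine sum_le_card_nsmul _ _ _ fun p hp ↦ ?_
    obtain ⟨hpI, hp2⟩ := mem_powersetCard.1 hp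
    obtain ⟨a, b, hab, rfl⟩ := card_eq_two.1 hp2
    have ha : a ∈ I := hpI (mem_insert_self a {b})
    have hb : b ∈ I := hpI (by simp)
    simpa using hmu.card_filter_adj_adj_le hab (hI.isIndepSet ha hb hab)
      (by simpa using hI.subset ha) (by simpa using hI.subset hb)

theorem card_le_sq_of_isIndepSet_of_subset_neighborFinset {lam : ℝ} (hlam : 0 < lam)
    (heig : MinEigGE G (-lam)) {x : V} {I : Finset V} (hIx : I ⊆ G.neighborFinset x)
    (hI : G.IsIndepSet (I : Set V)) : (#I : ℝ) ≤ lam ^ 2 := by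
  have hxI : x ∉ I := fun hx ↦ G.loopless.irrefl x (by simpa using hIx hx)
  set z : V → ℝ := lam • Pi.single x 1 - ∑ v ∈ I, Pi.single v 1
  have hz (w : V → ℝ) : z ⬝ᵥ w = lam * w x - ∑ v ∈ I, w v := by
    simp [z, sub_dotProduct, sum_dotProduct, single_dotProduct]
  have hzv (v : V) : z v = lam * (if v = x then 1 else 0) - if v ∈ I then 1 else 0 := by
    simp [z, Pi.single_apply]
  have hzz : z ⬝ᵥ z = lam ^ 2 + #I := by
    rw [hz, hzv, sum_congr rfl fun v hv ↦ hzv v]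
    simp [hxI, sq]
  have hxAdj (u : V) (hu : u ∈ I) : G.adjMatrix ℝ x u = 1 := by simpa using hIx hu
  have hIAdj (v : V) (hv : v ∈ I) (u : V) (hu : u ∈ I) : G.adjMatrix ℝ v u = 0 := by
    simpa using fun h ↦ hI hv hu (G.ne_of_adj h) h
  have hAz (v : V) : (G.adjMatrix ℝ *ᵥ z) v =
      lam * G.adjMatrix ℝ v x - ∑ u ∈ I, G.adjMatrix ℝ v u := by
    rw [mulVec, dotProduct_comm, hz]
  have hzAz : z ⬝ᵥ (G.adjMatrix ℝ *ᵥ z) = -2 * lam * #I := by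
    have hAzI (v : V) (hv : v ∈ I) : (G.adjMatrix ℝ *ᵥ z) v = lam := by
      rw [hAz, sum_congr rfl (hIAdj v hv)]
      simp [((G.mem_neighborFinset x v).1 (hIx hv)).symm]
    rw [hz, hAz, sum_congr rfl hxAdj, sum_congr rfl hAzI]
    simp only [adjMatrix_apply, SimpleGraph.irrefl, ↓reduceIte, mul_zero, sum_const, nsmul_eq_mul,
      mul_one, zero_sub, mul_neg, neg_mul]
    ring
  have := (isHermitian_iff_isSymm.2 G.isSymm_adjMatrix).mul_dotProduct_self_le_dotProduct_mulVec
    heig z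
  rw [hzz, hzAz] at this
  nlinarith

end SimpleGraph

theorem sub_choose_two_mul_div_add_one_le {d k m c K : ℕ} (hc : 0 < c) (hm : 0 < m)
    (hkm : k ≤ m) (hK : 0 < K) (h : d ≤ k.choose 2 * (c - 1) + k * (K - 1)) :
    ((d : ℝ) - (m.choose 2 : ℝ) * ((c : ℝ) - 1)) / m + 1 ≤ K := by
  have h' : (d : ℝ) ≤ k * (k - 1) / 2 * ((c : ℝ) - 1) + k * ((K : ℝ) - 1) := by
    have := (Nat.cast_le (α := ℝ)).2 h
    push_cast [Nat.cast_sub hc, Nat.cast_sub hK, Nat.cast_choose_two] at this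
    exact this
  have hm1 : (1 : ℝ) ≤ m := Nat.one_le_cast.2 hm
  have hmR : (0 : ℝ) < m := by linarith
  have hkmR : (k : ℝ) ≤ m := by exact_mod_cast hkm
  have hcR : (1 : ℝ) ≤ c := by exact_mod_cast hc
  have hKR : (1 : ℝ) ≤ K := by exact_mod_cast hK
  rw [Nat.cast_choose_two, div_add_one hmR.ne', div_le_iff₀ hmR]
  rcases k.eq_zero_or_pos with rfl | hk
  · simp only [CharP.cast_eq_zero, zero_mul, add_zero] at h'
    nlinarith [mul_nonneg (mul_nonneg hmR.le (sub_nonneg.2 hm1)) (sub_nonneg.2 hcR)]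
  · have hkR : (0 : ℝ) < k := by exact_mod_cast hk
    nlinarith [mul_le_mul_of_nonneg_left h' hmR.le,
      mul_nonneg (sub_nonneg.2 hkmR) (Nat.cast_nonneg (α := ℝ) d),
      mul_nonneg (mul_nonneg (mul_nonneg hmR.le hkR.le) (sub_nonneg.2 hkmR)) (sub_nonneg.2 hcR)]

theorem statement0 {V : Type*} [Fintype V] [DecidableEq V]
    (G : SimpleGraph V) [DecidableRel G.Adj]
    (c : ℕ) (hc : 0 < c) (lam : ℝ) (hlam : 1 ≤ lam)
    (hmu : MuBounded G c) (heig : MinEigGE G (-lam)) (x : V) :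
    ∃ s : Finset V, IsMaximalCliqueF G s ∧ x ∈ s ∧
      ((G.degree x : ℝ) - (Nat.choose ⌊lam ^ 2⌋₊ 2 : ℝ) * ((c : ℝ) - 1)) / (⌊lam ^ 2⌋₊ : ℝ) + 1
        ≤ (s.card : ℝ) := by
  obtain ⟨I, hI⟩ := G.exists_isMaximumIndepSubset (G.neighborFinset x)
  have hIm : #I ≤ ⌊lam ^ 2⌋₊ := Nat.le_floor <|
    G.card_le_sq_of_isIndepSet_of_subset_neighborFinset (by linarith) heig hI.subset hI.isIndepSet
  have hm : 0 < ⌊lam ^ 2⌋₊ := Nat.floor_pos.2 (one_le_pow₀ hlam)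
  obtain ⟨K, hK, hxK, hdeg⟩ := hmu.exists_isClique_degree_le hI
  obtain ⟨s, hs, hKs⟩ := G.exists_isMaximalCliqueF_superset hK
  refine ⟨s, hs, hKs hxK, ?_⟩
  calc _ ≤ (#K : ℝ) := sub_choose_two_mul_div_add_one_le hc hm hIm (card_pos.2 ⟨x, hxK⟩) hdeg
    _ ≤ #s := by exact_mod_cast card_le_card hKs
end

section
/- Let c and r be positive integers and let λ be a real number with ⌊λ²⌋ ≥ 2. Let G be a finite simple graph that is μ-bounded with parameter c and whose smallest adjacency eigenvalue satisfies λ_min(G) ≥ −λ. If x is a vertex of G such that every maximal clique of G containing x has order at most d(x) − r, then there exist two distinct maximal cliques C₁ and C₂ of G containing x such that the order of C₁ is at least (d(x) − (⌊λ²⌋ choose 2)·(c−1))/⌊λ²⌋ + 1 and the order of C₂ is at least (r − (⌊λ²⌋ choose 2)·(c−1) + 1)/(⌊λ²⌋ − 1) + 1. -/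
open Finset

/-!
Let `I` be a maximum independent set inside `N(x)`. Testing the positive semidefinite `A + λ`
on `a • 1_x + 1_I` for all real `a` shows `|I| ≤ λ²`. By maximality, a neighbour of `x` with at
most one neighbour in `I` can replace some `y ∈ I`, and the vertices that can replace a fixed
`y` form a clique (two non-adjacent ones would enlarge `I`). A neighbour of `x` adjacent to two
vertices `y, w` of `I` is a common neighbour of the non-adjacent pair `y, w` other than `x`, so
there are at most `C(|I|, 2)(c - 1)` of these. Pigeonhole over `I` makes the largest
replacement clique, plus `x`, part of a large maximal clique `C₁`. As `|C₁| ≤ d(x) - r`, more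
than `r` neighbours of `x` lie outside `C₁`; apart from the exceptional ones they are covered by
the replacement cliques of the other `|I| - 1` vertices of `I`, and the largest of these gives
`C₂`.
-/

open Matrix
namespace MinEigGE

variable {V : Type*} [Fintype V] [DecidableEq V] {G : SimpleGraph V} [DecidableRel G.Adj]
  {lam : ℝ}

open scoped Pointwise in
theorem posSemidef_adjMatrix_add_smul_one (heig : MinEigGE G (-lam)) :
    (G.adjMatrix ℝ + lam • (1 : Matrix V V ℝ)).PosSemidef := by
  have hH : (G.adjMatrix ℝ + lam • (1 : Matrix V V ℝ)).IsHermitian :=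
    (G.isSymm_adjMatrix.add ((isSymm_one (α := ℝ) (n := V)).smul lam) :)
  have hspec : spectrum ℝ (G.adjMatrix ℝ + lam • (1 : Matrix V V ℝ)) =
      ({lam} : Set ℝ) + spectrum ℝ (G.adjMatrix ℝ) := by
    rw [add_comm, ← Algebra.algebraMap_eq_smul_one, spectrum.singleton_add_eq]
  refine hH.posSemidef_iff_eigenvalues_nonneg.mpr fun i => ?_
  obtain ⟨_, rfl, μ, hμ, hsum⟩ :=
    Set.mem_add.mp (hspec ▸ hH.eigenvalues_mem_spectrum_real i)
  have := heig μ hμ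
  change (0 : ℝ) ≤ _
  linarith

theorem card_le_sq_of_isIndepSet (heig : MinEigGE G (-lam)) {x : V} {I : Finset V}
    (hIN : I ⊆ G.neighborFinset x) (hI : G.IsIndepSet (I : Set V)) :
    (#I : ℝ) ≤ lam ^ 2 := by
  have hxI : x ∉ I := fun h => G.notMem_neighborFinset_self x (hIN h)
  have hquad : ∀ a : ℝ, 0 ≤ lam * (a * a) + 2 * #I * a + lam * #I := by
    intro a
    let v : V → ℝ := fun u => (if u = x then a else 0) + if u ∈ I then 1 else 0
    have hdot : ∀ w : V → ℝ, v ⬝ᵥ w = a * w x + ∑ u ∈ I, w u := by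
      intro w
      simp only [v, dotProduct, add_mul, Finset.sum_add_distrib, ite_mul, one_mul, zero_mul,
        Finset.sum_ite_eq', Finset.mem_univ, if_true, Finset.sum_ite_mem, Finset.univ_inter]
    have hAx : (G.adjMatrix ℝ *ᵥ v) x = #I := by
      simp [v, Finset.sum_add_distrib, Finset.inter_eq_right.mpr hIN]
    have hAI : ∀ u ∈ I, (G.adjMatrix ℝ *ᵥ v) u = a := by
      intro u hu
      have hxu : G.Adj u x := (G.mem_neighborFinset x u).mp (hIN hu) |>.symm
      rw [SimpleGraph.adjMatrix_mulVec_apply, Finset.sum_eq_single_of_mem x (by simpa using hxu)]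
      · simp [v, hxI]
      · intro w hw hwx
        have huw : G.Adj u w := (G.mem_neighborFinset u w).mp hw
        have hwI : w ∉ I := fun hwI => hI hu hwI huw.ne huw
        simp [v, hwx, hwI]
    have hvAv : v ⬝ᵥ (G.adjMatrix ℝ *ᵥ v) = 2 * #I * a := by
      rw [hdot, hAx, Finset.sum_congr rfl hAI, Finset.sum_const, nsmul_eq_mul]
      ring
    have hvv : v ⬝ᵥ v = a * a + #I := by
      have hvI : ∀ u ∈ I, v u = 1 := fun u hu => by simp [v, hu, ne_of_mem_of_not_mem hu hxI]
      rw [hdot, Finset.sum_congr rfl hvI, Finset.sum_const, nsmul_eq_mul, mul_one]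
      simp [v, hxI]
    have := heig.posSemidef_adjMatrix_add_smul_one.dotProduct_mulVec_nonneg v
    simp only [star_trivial, add_mulVec, smul_mulVec, one_mulVec, dotProduct_add,
      dotProduct_smul, hvAv, hvv, smul_eq_mul] at this
    linarith
  have := discrim_le_zero hquad
  rw [discrim] at this
  nlinarith [(Nat.cast_nonneg #I : (0:ℝ) ≤ #I)]

end MinEigGE

theorem Finset.exists_card_le_card_mul_card_of_subset_biUnion {ι β : Type*} [DecidableEq β]
    {s : Finset ι} {t : Finset β} {f : ι → Finset β} (hs : s.Nonempty)
    (h : t ⊆ s.biUnion f) :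
    ∃ i ∈ s, #t ≤ #s * #(f i) := by
  obtain ⟨i, hi, hmax⟩ := s.exists_max_image (fun i => #(f i)) hs
  exact ⟨i, hi, (card_le_card h).trans (card_biUnion_le_card_mul _ _ _ hmax)⟩

namespace SimpleGraph

variable {V : Type*} {G : SimpleGraph V}

theorem IsIndepSet.insert {s : Set V} {a : V} (hs : G.IsIndepSet s) (h : ∀ b ∈ s, ¬G.Adj a b) :
    G.IsIndepSet (insert a s) :=
  Set.pairwise_insert.mpr ⟨hs, fun b hb _ => ⟨h b hb, fun hba => h b hb hba.symm⟩⟩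

variable (G) in
structure IsMaximumIndepSetIn (s I : Finset V) : Prop where
  subset : I ⊆ s
  isIndepSet : G.IsIndepSet (I : Set V)
  maximum : ∀ J ⊆ s, G.IsIndepSet (J : Set V) → #J ≤ #I

variable (G) in
theorem exists_isMaximumIndepSetIn (s : Finset V) : ∃ I, G.IsMaximumIndepSetIn s I := by
  classical
  obtain ⟨I, hI, hmax⟩ :=
    (s.powerset.filter fun J : Finset V => G.IsIndepSet (J : Set V)).exists_max_image card
      ⟨∅, by simp⟩
  simp only [mem_filter, mem_powerset] at hI hmax
  exact ⟨I, hI.1, hI.2, fun J hJ hJI => hmax J ⟨hJ, hJI⟩⟩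

theorem IsMaximumIndepSetIn.nonempty {s I : Finset V} (h : G.IsMaximumIndepSetIn s I)
    (hs : s.Nonempty) : I.Nonempty := by
  obtain ⟨z, hz⟩ := hs
  exact card_pos.mp (h.maximum {z} (singleton_subset_iff.mpr hz) (by simp))

variable [DecidableEq V] [DecidableRel G.Adj] {s I C : Finset V} {y : V}

variable (G) in
/-- The vertices `z` of `s` that can replace `y` in `I`. -/
def exchangeSet (s I : Finset V) (y : V) : Finset V :=
  {z ∈ s \ I.erase y | ∀ w ∈ I.erase y, ¬G.Adj w z}

variable (G) in
def doublyAdjacent (s I : Finset V) : Finset V :=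
  {z ∈ s | 1 < #{w ∈ I | G.Adj w z}}

theorem exchangeSet_subset : G.exchangeSet s I y ⊆ s :=
  (filter_subset _ _).trans sdiff_subset

namespace IsMaximumIndepSetIn

variable (h : G.IsMaximumIndepSetIn s I)
include h

theorem isClique_exchangeSet (hy : y ∈ I) : G.IsClique (G.exchangeSet s I y : Set V) := by
  intro u hu v hv huv
  simp only [exchangeSet, coe_filter, mem_sdiff, Set.mem_ofPred_eq] at hu hv
  by_contra hnadj
  have hindep : G.IsIndepSet (insert u (insert v (I.erase y)) : Finset V) := by
    rw [coe_insert, coe_insert]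
    refine IsIndepSet.insert (IsIndepSet.insert (h.isIndepSet.mono (by simp))
      fun w hw hvw => hv.2 w hw hvw.symm) ?_
    rintro w (rfl | hw) huw
    exacts [hnadj huw, hu.2 w hw huw.symm]
  have hcard := h.maximum _ (insert_subset hu.1.1 (insert_subset hv.1.1
    ((erase_subset y I).trans h.subset))) hindep
  rw [card_insert_of_notMem (by simp [huv, hu.1.2]), card_insert_of_notMem hv.1.2,
    card_erase_of_mem hy] at hcard
  have := card_pos.mpr ⟨y, hy⟩
  omega

theorem sdiff_doublyAdjacent_subset_biUnion :
    s \ G.doublyAdjacent s I ⊆ I.biUnion (G.exchangeSet s I) := by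
  intro z hz
  simp only [doublyAdjacent, mem_sdiff, mem_filter, not_and, not_lt, card_le_one] at hz
  obtain ⟨hzs, hzI⟩ := hz
  have hsingle : ∀ w ∈ I, ∀ w' ∈ I, G.Adj w z → G.Adj w' z → w = w' :=
    fun w hw w' hw' hwz hw'z => hzI hzs w ⟨hw, hwz⟩ w' ⟨hw', hw'z⟩
  by_cases hz : z ∈ I
  · refine mem_biUnion.mpr ⟨z, hz, ?_⟩
    simp only [exchangeSet, mem_filter, mem_sdiff, mem_erase]
    exact ⟨⟨hzs, by simp⟩, fun w hw => h.isIndepSet hw.2 hz hw.1⟩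
  · obtain ⟨y, hy, hyz⟩ : ∃ y ∈ I, G.Adj y z := by
      by_contra! hnone
      have := h.maximum _ (insert_subset hzs h.subset)
        (by push_cast; exact IsIndepSet.insert h.isIndepSet fun w hw hzw => hnone w hw hzw.symm)
      rw [card_insert_of_notMem hz] at this
      omega
    refine mem_biUnion.mpr ⟨y, hy, ?_⟩
    simp only [exchangeSet, mem_filter, mem_sdiff, mem_erase]
    exact ⟨⟨hzs, fun hz' => hz hz'.2⟩, fun w hw hwz => hw.1 (hsingle w hw.2 y hy hwz hyz)⟩

theorem exists_card_le_add_card_mul_card_exchangeSet (hI : I.Nonempty) :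
    ∃ y ∈ I, #s ≤ #(G.doublyAdjacent s I) + #I * #(G.exchangeSet s I y) := by
  obtain ⟨y, hy, hle⟩ :=
    exists_card_le_card_mul_card_of_subset_biUnion hI h.sdiff_doublyAdjacent_subset_biUnion
  exact ⟨y, hy, (card_le_card_sdiff_add_card (t := G.doublyAdjacent s I)).trans (by omega)⟩

theorem exists_isClique_not_subset (hy : y ∈ I) (hC : G.exchangeSet s I y ⊆ C)
    (hsC : (s \ C).Nonempty) :
    ∃ K ⊆ s, G.IsClique (K : Set V) ∧ (∃ z ∈ K, z ∉ C) ∧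
      #(s \ C) ≤ #(G.doublyAdjacent s I) + (#I - 1) * #K := by
  by_cases hB : ((s \ C) \ G.doublyAdjacent s I).Nonempty
  · have hcover : (s \ C) \ G.doublyAdjacent s I ⊆
        (I.erase y).biUnion fun y' => G.exchangeSet s I y' \ C := by
      intro z hz
      obtain ⟨y', hy', hzy'⟩ := mem_biUnion.mp
        (h.sdiff_doublyAdjacent_subset_biUnion (sdiff_subset_sdiff sdiff_subset le_rfl hz))
      have hzC : z ∉ C := (mem_sdiff.mp (mem_sdiff.mp hz).1).2
      exact mem_biUnion.mpr ⟨y', mem_erase.mpr ⟨fun he => hzC (hC (he ▸ hzy')), hy'⟩,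
        mem_sdiff.mpr ⟨hzy', hzC⟩⟩
    have hne : (I.erase y).Nonempty := by
      obtain ⟨z, hz⟩ := hB
      obtain ⟨y', hy', -⟩ := mem_biUnion.mp (hcover hz)
      exact ⟨y', hy'⟩
    obtain ⟨y', hy', hle⟩ := exists_card_le_card_mul_card_of_subset_biUnion hne hcover
    rw [card_erase_of_mem hy] at hle
    obtain ⟨z, hz⟩ : (G.exchangeSet s I y' \ C).Nonempty := by
      rw [← card_pos]
      have := card_pos.mpr hB
      exact Nat.pos_of_mul_pos_left (this.trans_le hle)
    refine ⟨_, sdiff_subset.trans exchangeSet_subset,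
      (h.isClique_exchangeSet (mem_of_mem_erase hy')).subset (by simp),
      ⟨z, hz, (mem_sdiff.mp hz).2⟩,
      (card_le_card_sdiff_add_card (t := G.doublyAdjacent s I)).trans ?_⟩
    omega
  · obtain ⟨z, hz⟩ := hsC
    refine ⟨{z}, singleton_subset_iff.mpr (mem_sdiff.mp hz).1, by simp,
      ⟨z, mem_singleton_self z, (mem_sdiff.mp hz).2⟩,
      (card_le_card ?_).trans (Nat.le_add_right _ _)⟩
    rwa [not_nonempty_iff_eq_empty, sdiff_eq_empty_iff_subset] at hB

end IsMaximumIndepSetIn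

variable [Fintype V]

variable (G) in
theorem degree_add_one_le_card_sdiff_add_card {x : V} (hxC : x ∈ C) :
    G.degree x + 1 ≤ #(G.neighborFinset x \ C) + #C := by
  have hinter : G.neighborFinset x ∩ C ⊆ C.erase x := fun z hz =>
    mem_erase.mpr ⟨fun hzx => G.notMem_neighborFinset_self x (hzx ▸ (mem_inter.mp hz).1),
      (mem_inter.mp hz).2⟩
  have := card_le_card hinter
  rw [card_erase_of_mem hxC] at this
  have := card_sdiff_add_card_inter (G.neighborFinset x) C
  have := card_pos.mpr ⟨x, hxC⟩
  rw [← card_neighborFinset_eq_degree]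
  omega

end SimpleGraph


section

variable {V : Type*} [Fintype V] [DecidableEq V] {G : SimpleGraph V} [DecidableRel G.Adj]

theorem MuBounded.card_doublyAdjacent_le {c : ℕ} (hmu : MuBounded G c) {x : V} {I : Finset V}
    (hIN : I ⊆ G.neighborFinset x) (hI : G.IsIndepSet (I : Set V)) :
    #(G.doublyAdjacent (G.neighborFinset x) I) ≤ (#I).choose 2 * (c - 1) := by
  have hsub : G.doublyAdjacent (G.neighborFinset x) I ⊆ (I.powersetCard 2).biUnion
      fun p => {z ∈ G.neighborFinset x | ∀ y ∈ p, G.Adj y z} := by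
    intro z hz
    simp only [SimpleGraph.doublyAdjacent, mem_filter, one_lt_card] at hz
    obtain ⟨hzN, y, ⟨hy, hyz⟩, w, ⟨hw, hwz⟩, hyw⟩ := hz
    refine mem_biUnion.mpr ⟨{y, w}, mem_powersetCard.mpr ⟨by simp [insert_subset_iff, hy, hw],
      card_pair hyw⟩, mem_filter.mpr ⟨hzN, by simp [hyz, hwz]⟩⟩
  refine (card_le_card hsub).trans ?_
  rw [← card_powersetCard]
  refine card_biUnion_le_card_mul _ _ _ fun p hp => ?_
  obtain ⟨hpI, hp2⟩ := mem_powersetCard.mp hp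
  obtain ⟨y, w, hyw, rfl⟩ := card_eq_two.mp hp2
  have hy : y ∈ I := hpI (by simp)
  have hw : w ∈ I := hpI (by simp)
  have hx : x ∈ G.neighborFinset y ∩ G.neighborFinset w := by
    simp only [mem_inter, SimpleGraph.mem_neighborFinset]
    exact ⟨((G.mem_neighborFinset x y).mp (hIN hy)).symm,
      ((G.mem_neighborFinset x w).mp (hIN hw)).symm⟩
  calc #{z ∈ G.neighborFinset x | ∀ a ∈ ({y, w} : Finset V), G.Adj a z}
      ≤ #((G.neighborFinset y ∩ G.neighborFinset w).erase x) := by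
        refine card_le_card fun z hz => ?_
        simp only [mem_filter, mem_insert, mem_singleton, forall_eq_or_imp, forall_eq] at hz
        simp only [mem_erase, mem_inter, SimpleGraph.mem_neighborFinset]
        exact ⟨fun hzx => G.notMem_neighborFinset_self x (hzx ▸ hz.1), hz.2⟩
    _ ≤ c - 1 := by
        rw [card_erase_of_mem hx]
        exact Nat.sub_le_sub_right (hmu y w hyw (hI hy hw hyw)) 1

theorem exists_isMaximalCliqueF_superset {s : Finset V} (hs : G.IsClique (s : Set V)) :
    ∃ t, IsMaximalCliqueF G t ∧ s ⊆ t := by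
  obtain ⟨t, ht, hmax⟩ := exists_max_image
    {t : Finset V | G.IsClique (t : Set V) ∧ s ⊆ t} card ⟨s, by simp [hs]⟩
  simp only [mem_filter, mem_univ, true_and] at ht hmax
  exact ⟨t, ⟨ht.1, fun t' ht' htt' =>
    eq_of_subset_of_card_le htt' (hmax t' ⟨ht', ht.2.trans htt'⟩)⟩, ht.2⟩

theorem exists_isMaximalCliqueF_insert {x : V} {K : Finset V} (hK : G.IsClique (K : Set V))
    (hKN : K ⊆ G.neighborFinset x) :
    ∃ C, IsMaximalCliqueF G C ∧ x ∈ C ∧ K ⊆ C ∧ #K + 1 ≤ #C := by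
  have hxK : x ∉ K := fun h => G.notMem_neighborFinset_self x (hKN h)
  obtain ⟨C, hC, hKC⟩ := exists_isMaximalCliqueF_superset (s := insert x K)
    (by simpa using hK.insert fun b hb _ => (G.mem_neighborFinset x b).mp (hKN hb))
  refine ⟨C, hC, hKC (mem_insert_self x K), (subset_insert x K).trans hKC, ?_⟩
  simpa [card_insert_of_notMem hxK] using card_le_card hKC

end

theorem div_add_one_le_of_le_choose_mul_add_mul {n c a m s t : ℕ} (hc : 0 < c) (hm : 0 < m)
    (h : a ≤ n.choose 2 * (c - 1) + m * s) (hst : s + 1 ≤ t) :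
    ((a : ℝ) - n.choose 2 * ((c : ℝ) - 1)) / m + 1 ≤ t := by
  have hm' : (0 : ℝ) < m := by exact_mod_cast hm
  have h' : (a : ℝ) ≤ n.choose 2 * ((c : ℝ) - 1) + m * s := by
    have := (Nat.cast_le (α := ℝ)).mpr h
    push_cast [Nat.cast_sub hc] at this
    exact this
  have hst' : (s : ℝ) + 1 ≤ t := by exact_mod_cast hst
  rw [div_add_one hm'.ne', div_le_iff₀ hm']
  nlinarith

theorem statement1_general {V : Type*} [Fintype V] [DecidableEq V]
    (G : SimpleGraph V) [DecidableRel G.Adj]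
    (c r : ℕ) (hc : 0 < c) (lam : ℝ) (hlam : 2 ≤ ⌊lam ^ 2⌋₊)
    (hmu : MuBounded G c) (heig : MinEigGE G (-lam)) (x : V)
    (hmax : ∀ s : Finset V, IsMaximalCliqueF G s → x ∈ s →
      (s.card : ℤ) ≤ (G.degree x : ℤ) - r) :
    ∃ C₁ C₂ : Finset V, C₁ ≠ C₂ ∧
      IsMaximalCliqueF G C₁ ∧ IsMaximalCliqueF G C₂ ∧ x ∈ C₁ ∧ x ∈ C₂ ∧
      ((G.degree x : ℝ) - (Nat.choose ⌊lam ^ 2⌋₊ 2 : ℝ) * ((c : ℝ) - 1)) / (⌊lam ^ 2⌋₊ : ℝ) + 1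
        ≤ (C₁.card : ℝ) ∧
      ((r : ℝ) - (Nat.choose ⌊lam ^ 2⌋₊ 2 : ℝ) * ((c : ℝ) - 1) + 1) / ((⌊lam ^ 2⌋₊ : ℝ) - 1) + 1
        ≤ (C₂.card : ℝ) := by
  set k := ⌊lam ^ 2⌋₊
  have hsdiff : ∀ C, IsMaximalCliqueF G C → x ∈ C → r + 1 ≤ #(G.neighborFinset x \ C) :=
    fun C hC hxC => by
      have := hmax C hC hxC
      have := G.degree_add_one_le_card_sdiff_add_card hxC
      omega
  obtain ⟨C₀, hC₀, hxC₀, -⟩ :=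
    exists_isMaximalCliqueF_insert (G := G) (x := x) (K := ∅) (by simp) (empty_subset _)
  obtain ⟨I, hI⟩ := G.exists_isMaximumIndepSetIn (G.neighborFinset x)
  have hIk : #I ≤ k := Nat.le_floor (heig.card_le_sq_of_isIndepSet hI.subset hI.isIndepSet)
  have hB := (hmu.card_doublyAdjacent_le hI.subset hI.isIndepSet).trans
    (Nat.mul_le_mul_right (c - 1) (Nat.choose_le_choose 2 hIk))
  have hNC₀ : (G.neighborFinset x \ C₀).Nonempty :=
    card_pos.mp (by have := hsdiff C₀ hC₀ hxC₀; omega)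
  obtain ⟨y, hy, hdeg⟩ :=
    hI.exists_card_le_add_card_mul_card_exchangeSet (hI.nonempty (hNC₀.mono sdiff_subset))
  obtain ⟨C₁, hC₁, hxC₁, hyC₁, hC₁card⟩ :=
    exists_isMaximalCliqueF_insert (hI.isClique_exchangeSet hy) SimpleGraph.exchangeSet_subset
  obtain ⟨K, hKN, hK, ⟨z, hzK, hzC₁⟩, hKcard⟩ := hI.exists_isClique_not_subset hy hyC₁
    (card_pos.mp (by have := hsdiff C₁ hC₁ hxC₁; omega))
  obtain ⟨C₂, hC₂, hxC₂, hKC₂, hC₂card⟩ := exists_isMaximalCliqueF_insert hK hKN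
  refine ⟨C₁, C₂, fun h => hzC₁ (h ▸ hKC₂ hzK), hC₁, hC₂, hxC₁, hxC₂, ?_, ?_⟩
  · exact div_add_one_le_of_le_choose_mul_add_mul hc (by omega)
      (hdeg.trans (add_le_add hB (Nat.mul_le_mul_right _ hIk))) hC₁card
  · have hK := (hsdiff C₁ hC₁ hxC₁).trans
      (hKcard.trans (add_le_add hB (Nat.mul_le_mul_right _ (Nat.sub_le_sub_right hIk 1))))
    convert div_add_one_le_of_le_choose_mul_add_mul hc (by omega) hK hC₂card using 3
    · push_cast; ring
    · push_cast [Nat.cast_sub (by omega : 1 ≤ k)]; rfl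

theorem statement1 {V : Type*} [Fintype V] [DecidableEq V]
    (G : SimpleGraph V) [DecidableRel G.Adj]
    (c r : ℕ) (hc : 0 < c) (hr : 0 < r) (lam : ℝ) (hlam : 2 ≤ ⌊lam ^ 2⌋₊)
    (hmu : MuBounded G c) (heig : MinEigGE G (-lam)) (x : V)
    (hmax : ∀ s : Finset V, IsMaximalCliqueF G s → x ∈ s →
      (s.card : ℤ) ≤ (G.degree x : ℤ) - r) :
    ∃ C₁ C₂ : Finset V, C₁ ≠ C₂ ∧
      IsMaximalCliqueF G C₁ ∧ IsMaximalCliqueF G C₂ ∧ x ∈ C₁ ∧ x ∈ C₂ ∧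
      ((G.degree x : ℝ) - (Nat.choose ⌊lam ^ 2⌋₊ 2 : ℝ) * ((c : ℝ) - 1)) / (⌊lam ^ 2⌋₊ : ℝ) + 1
        ≤ (C₁.card : ℝ) ∧
      ((r : ℝ) - (Nat.choose ⌊lam ^ 2⌋₊ 2 : ℝ) * ((c : ℝ) - 1) + 1) / ((⌊lam ^ 2⌋₊ : ℝ) - 1) + 1
        ≤ (C₂.card : ℝ) :=
  statement1_general G c r hc lam hlam hmu heig x hmax
end

section
/- Let s be a positive integer and p₁ := s(s−1)+1. Let G be the finite simple graph whose vertex set is the disjoint union of a single vertex u and s+1 pairwise disjoint sets C₁,…,C_{s+1} each of size p₁, in which two distinct vertices are adjacent if and only if they lie in the same set Cᵢ, or one of them is u and the other lies in some Cᵢ. Then the smallest eigenvalue of the adjacency matrix of G is strictly less than −s. -/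
/-- The graph consisting of `s+1` pairwise disjoint cliques `C₁, …, C_{s+1}`,
each of order `p₁ = s(s-1)+1` (with no edges between distinct cliques), together with
an extra vertex `u` (encoded as `none`) adjacent to all clique vertices.
A vertex `some (i, j)` is the `j`-th vertex of the clique `Cᵢ`. -/
def coneOverCliques (s p : ℕ) : SimpleGraph (Option (Fin s × Fin p)) where
  Adj a b := a ≠ b ∧ (Option.map Prod.fst a = Option.map Prod.fst b ∨ a = none ∨ b = none)
  symm := by
    constructor
    intro a b h
    exact ⟨Ne.symm h.1, by tauto⟩
  loopless := by
    constructor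
    intro a h
    exact h.1 rfl

instance (s p : ℕ) : DecidableRel (coneOverCliques s p).Adj := fun a b =>
  inferInstanceAs (Decidable (_ ∧ _))

/-!
The partition into `{u}` and the clique vertices is equitable: every clique vertex sees `u`
and `p₁ - 1` clique vertices, and `u` sees all `(s + 1) p₁` clique vertices. Hence the vector
equal to `y` at `u` and to `1` elsewhere is an eigenvector for `μ` as soon as
`μ = y + (p₁ - 1)` and `μ y = (s + 1) p₁`, i.e. `μ (μ - (p₁ - 1)) = (s + 1) p₁`. At `μ = -s`
this quadratic takes the value `-1`, so its smaller root lies below `-s`.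
-/

open Matrix

theorem Matrix.mem_spectrum_of_mulVec_eq_smul {R n : Type*} [CommRing R] [Fintype n]
    [DecidableEq n] {A : Matrix n n R} {μ : R} {v : n → R} (hv : v ≠ 0) (h : A *ᵥ v = μ • v) :
    μ ∈ spectrum R A :=
  spectrum_toLin' A ▸
    (Module.End.hasEigenvalue_of_hasEigenvector
      ⟨Module.End.mem_eigenspace_iff.2 (by simpa using h), hv⟩).mem_spectrum

theorem exists_lt_mul_sub_eq_of_sq_sub_mul_sub_neg {b c t : ℝ} (h : t ^ 2 - b * t - c < 0) :
    ∃ μ < t, μ * (μ - b) = c := by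
  have hdisc : (2 * t - b) ^ 2 < b ^ 2 + 4 * c := by nlinarith
  have hsqrt := Real.sq_sqrt (by nlinarith [sq_nonneg (2 * t - b)] : 0 ≤ b ^ 2 + 4 * c)
  refine ⟨(b - √(b ^ 2 + 4 * c)) / 2, ?_, by nlinarith⟩
  have : |2 * t - b| < √(b ^ 2 + 4 * c) := Real.lt_sqrt_of_sq_lt (by simpa [sq_abs] using hdisc)
  linarith [neg_abs_le (2 * t - b)]

namespace coneOverCliques

variable {k q : ℕ}

theorem adjMatrix_mulVec_apply_none (y : ℝ) :
    ((coneOverCliques k (q + 1)).adjMatrix ℝ *ᵥ fun a => a.elim y fun _ => 1) none =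
      k * (q + 1) := by
  rw [SimpleGraph.adjMatrix_mulVec_apply, SimpleGraph.neighborFinset_eq_filter,
    Finset.sum_filter, Fintype.sum_option]
  simp [coneOverCliques]

theorem adjMatrix_mulVec_apply_some (y : ℝ) (x : Fin k × Fin (q + 1)) :
    ((coneOverCliques k (q + 1)).adjMatrix ℝ *ᵥ fun a => a.elim y fun _ => 1) (some x) =
      y + q := by
  obtain ⟨i, j⟩ := x
  have hclique : ({z | (i = z.1 → j ≠ z.2) ∧ i = z.1} : Finset (Fin k × Fin (q + 1))) =
      (Finset.univ.erase j).map ⟨Prod.mk i, Prod.mk_right_injective i⟩ := by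
    ext ⟨a, b⟩
    simp only [ne_eq, Finset.mem_filter, Finset.mem_univ, true_and, Finset.map_erase,
      Function.Embedding.coeFn_mk, Finset.mem_erase, Prod.mk.injEq, not_and, Finset.mem_map,
      exists_eq_right, and_congr_left_iff]
    grind
  rw [SimpleGraph.adjMatrix_mulVec_apply, SimpleGraph.neighborFinset_eq_filter,
    Finset.sum_filter, Fintype.sum_option]
  simp [coneOverCliques, Prod.ext_iff, hclique]

theorem mem_spectrum_adjMatrix_of_mul_sub_eq (hk : 0 < k) {μ : ℝ}
    (hμ : μ * (μ - q) = k * (q + 1)) :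
    μ ∈ spectrum ℝ ((coneOverCliques k (q + 1)).adjMatrix ℝ) := by
  have hv : (fun a => a.elim (μ - q) fun _ => 1 : Option (Fin k × Fin (q + 1)) → ℝ) ≠ 0 :=
    fun h => by simpa using congrFun h (some (⟨0, hk⟩, 0))
  refine mem_spectrum_of_mulVec_eq_smul hv (funext fun a => ?_)
  cases a with
  | none => rw [adjMatrix_mulVec_apply_none]; simp [hμ]
  | some x => rw [adjMatrix_mulVec_apply_some]; simp

end coneOverCliques

theorem statement4_general (s : ℕ) :
    ∃ μ ∈ spectrum ℝ ((coneOverCliques (s + 1) (s * (s - 1) + 1)).adjMatrix ℝ),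
      μ < -(s : ℝ) := by
  have hq : ((s * (s - 1) : ℕ) : ℝ) = s ^ 2 - s := by
    rcases s with _ | s <;> push_cast <;> ring
  obtain ⟨μ, hμs, hμ⟩ := exists_lt_mul_sub_eq_of_sq_sub_mul_sub_neg
    (b := (s * (s - 1) : ℕ)) (c := ((s + 1 : ℕ) : ℝ) * ((s * (s - 1) : ℕ) + 1)) (t := -s)
    (by rw [hq]; push_cast; nlinarith)
  exact ⟨μ, coneOverCliques.mem_spectrum_adjMatrix_of_mul_sub_eq s.succ_pos hμ, hμs⟩

theorem statement4 (s : ℕ) (hs : 0 < s) :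
    ∃ μ ∈ spectrum ℝ ((coneOverCliques (s + 1) (s * (s - 1) + 1)).adjMatrix ℝ),
      μ < -(s : ℝ) :=
  statement4_general s
end

section
/- Let s be a positive integer and p₃ := (s+1)(s−1)²+1. Let G be the finite simple graph whose vertex set is the disjoint union of two vertices u, v and s pairwise disjoint sets C₁,…,C_s each of size p₃, in which two distinct vertices are adjacent if and only if they lie in the same set Cᵢ, or one of them is u and the other is v, or one of them is u and the other lies in some Cᵢ. Then the smallest eigenvalue of the adjacency matrix of G is strictly less than −s. -/
/-- Auxiliary projection: `none` for the two special vertices `u, v`,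
`some i` for vertices of clique `Cᵢ`. -/
def pendantProj {s p : ℕ} : Fin 2 ⊕ (Fin s × Fin p) → Option (Fin s)
  | Sum.inl _ => none
  | Sum.inr x => some x.1

/-- The graph consisting of `s` pairwise disjoint cliques `C₁, …, C_s` of order `p`
(with no edges between distinct cliques), a vertex `u = Sum.inl 0` adjacent to all clique
vertices, and a vertex `v = Sum.inl 1` adjacent only to `u`. -/
def coneWithPendant (s p : ℕ) : SimpleGraph (Fin 2 ⊕ (Fin s × Fin p)) where
  Adj a b := a ≠ b ∧ (a = Sum.inl 0 ∨ b = Sum.inl 0 ∨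
      (pendantProj a = pendantProj b ∧ pendantProj a ≠ none))
  symm := by
    constructor
    intro a b h
    refine ⟨Ne.symm h.1, ?_⟩
    rcases h.2 with h | h | ⟨h1, h2⟩
    · exact Or.inr (Or.inl h)
    · exact Or.inl h
    · exact Or.inr (Or.inr ⟨h1.symm, h1 ▸ h2⟩)
  loopless := by
    constructor
    intro a h
    exact h.1 rfl

instance (s p : ℕ) : DecidableRel (coneWithPendant s p).Adj := fun a b =>
  inferInstanceAs (Decidable (_ ∧ _))

/-! The Rayleigh quotient of a test vector bounds the smallest eigenvalue from above. Take the
vector with value `a` at `u`, `b` at `v` and `c` on all clique vertices, where `p` is the clique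
order. Then `x ⬝ Ax + s ‖x‖²` equals `2ab + 2spac + sp(p-1)c² + s(a² + b² + spc²)`. Choosing
`b = -a/s` leaves `((s²-1)a² + 2s²p ac + s²p(p-1+s)c²)/s`, which takes negative values exactly when
its discriminant is positive, i.e. when `p > (s+1)(s-1)²`. This is where `p₃` comes from. -/

open Matrix Pointwise

theorem Matrix.IsHermitian.exists_mem_spectrum_lt_of_dotProduct_mulVec_lt
    {n : Type*} [Fintype n] [DecidableEq n] {A : Matrix n n ℝ} (hA : A.IsHermitian)
    {t : ℝ} (x : n → ℝ) (h : x ⬝ᵥ A *ᵥ x < t * (x ⬝ᵥ x)) :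
    ∃ μ ∈ spectrum ℝ A, μ < t := by
  by_contra! hge
  have hshift : (A - algebraMap ℝ (Matrix n n ℝ) t).IsHermitian :=
    hA.sub (IsSelfAdjoint.algebraMap _ (.all t))
  have hpsd : (A - algebraMap ℝ (Matrix n n ℝ) t).PosSemidef := by
    refine hshift.posSemidef_iff_eigenvalues_nonneg.mpr fun i => ?_
    obtain ⟨μ, hμ, _, rfl, hi⟩ : hshift.eigenvalues i ∈ spectrum ℝ A - {t} := by
      rw [spectrum.sub_singleton_eq]
      exact hshift.eigenvalues_mem_spectrum_real i
    simp only [Pi.zero_apply, ← hi]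
    linarith [hge μ hμ]
  have hnonneg := hpsd.dotProduct_mulVec_nonneg x
  simp only [star_trivial, sub_mulVec, dotProduct_sub, Algebra.algebraMap_eq_smul_one,
    smul_mulVec, one_mulVec, dotProduct_smul, smul_eq_mul] at hnonneg
  linarith

lemma exists_rayleigh_lt_neg {s p : ℝ} (hs : 1 ≤ s) (hp : p = (s + 1) * (s - 1) ^ 2 + 1) :
    ∃ a b c : ℝ, 2 * a * b + 2 * s * p * a * c + s * p * (p - 1) * c ^ 2 <
      -s * (a ^ 2 + b ^ 2 + s * p * c ^ 2) := by
  rcases hs.eq_or_lt with rfl | hs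
  · -- the general witness below has `c = s² - 1 = 0` here
    exact ⟨-3, 2, 2, by norm_num [hp]⟩
  · refine ⟨-s ^ 2 * p, s * p, s ^ 2 - 1, ?_⟩
    have hform : 2 * (-s ^ 2 * p) * (s * p) + 2 * s * p * (-s ^ 2 * p) * (s ^ 2 - 1)
        + s * p * (p - 1) * (s ^ 2 - 1) ^ 2 + s * ((-s ^ 2 * p) ^ 2 + (s * p) ^ 2
        + s * p * (s ^ 2 - 1) ^ 2) = -(s * p * (s ^ 2 - 1)) := by
      rw [hp]; ring
    have hpos : 0 < s * p * (s ^ 2 - 1) := by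
      have : 0 < p := by rw [hp]; positivity
      have : 0 < s ^ 2 - 1 := by nlinarith
      positivity
    linarith

section coneWithPendant

variable {s p : ℕ}

@[simp] lemma coneWithPendant_adj_inl_inl {i j : Fin 2} :
    (coneWithPendant s p).Adj (.inl i) (.inl j) ↔ i ≠ j := by
  fin_cases i <;> fin_cases j <;> simp [coneWithPendant, pendantProj]

@[simp] lemma coneWithPendant_adj_inl_inr {i : Fin 2} {y : Fin s × Fin p} :
    (coneWithPendant s p).Adj (.inl i) (.inr y) ↔ i = 0 := by
  simp [coneWithPendant, pendantProj]

@[simp] lemma coneWithPendant_adj_inr_inl {i : Fin 2} {y : Fin s × Fin p} :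
    (coneWithPendant s p).Adj (.inr y) (.inl i) ↔ i = 0 := by
  rw [SimpleGraph.adj_comm, coneWithPendant_adj_inl_inr]

@[simp] lemma coneWithPendant_adj_inr_inr {y z : Fin s × Fin p} :
    (coneWithPendant s p).Adj (.inr y) (.inr z) ↔ y ≠ z ∧ y.1 = z.1 := by
  simp [coneWithPendant, pendantProj]

variable (s p) in
def coneTestVec (a b c : ℝ) : Fin 2 ⊕ (Fin s × Fin p) → ℝ := Sum.elim ![a, b] fun _ => c

lemma adjMatrix_mulVec_coneTestVec (a b c : ℝ) :
    (coneWithPendant s p).adjMatrix ℝ *ᵥ coneTestVec s p a b c =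
      Sum.elim ![b + s * p * c, a] fun _ => a + (p - 1) * c := by
  ext (i | ⟨i, j⟩)
  · fin_cases i <;> simp [mulVec, dotProduct, coneTestVec, Fintype.sum_sum_type]
  · simp only [mulVec, dotProduct, SimpleGraph.adjMatrix_apply, coneTestVec, ite_mul, one_mul,
      zero_mul, Fintype.sum_sum_type, coneWithPendant_adj_inr_inl, coneWithPendant_adj_inr_inr,
      Sum.elim_inl, Sum.elim_inr, Finset.sum_ite_eq', Finset.mem_univ, if_true, cons_val_zero,
      add_right_inj]
    rw [Fintype.sum_prod_type, Finset.sum_eq_single i (by intro i' _ hi'; simp [Ne.symm hi']) (by simp)]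
    simp [Finset.sum_ite, ← ne_eq, Finset.filter_ne, Nat.cast_sub (Fin.pos j)]

lemma coneTestVec_dotProduct_self (a b c : ℝ) :
    coneTestVec s p a b c ⬝ᵥ coneTestVec s p a b c = a ^ 2 + b ^ 2 + s * p * c ^ 2 := by
  simp only [dotProduct, coneTestVec, Fintype.sum_sum_type, Fin.sum_univ_two, Sum.elim_inl,
    Sum.elim_inr, cons_val_zero, cons_val_one, cons_val_fin_one, Finset.sum_const,
    Finset.card_univ, Fintype.card_prod, Fintype.card_fin, nsmul_eq_mul, Nat.cast_mul]
  ring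

lemma coneTestVec_dotProduct_adjMatrix_mulVec (a b c : ℝ) :
    coneTestVec s p a b c ⬝ᵥ (coneWithPendant s p).adjMatrix ℝ *ᵥ coneTestVec s p a b c =
      2 * a * b + 2 * s * p * a * c + s * p * (p - 1) * c ^ 2 := by
  rw [adjMatrix_mulVec_coneTestVec]
  simp only [dotProduct, coneTestVec, Fintype.sum_sum_type, Fin.sum_univ_two, Sum.elim_inl,
    Sum.elim_inr, cons_val_zero, cons_val_one, cons_val_fin_one, Finset.sum_const,
    Finset.card_univ, Fintype.card_prod, Fintype.card_fin, nsmul_eq_mul, Nat.cast_mul]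
  ring

end coneWithPendant

theorem statement6 (s : ℕ) (hs : 0 < s) :
    ∃ μ ∈ spectrum ℝ ((coneWithPendant s ((s + 1) * (s - 1) ^ 2 + 1)).adjMatrix ℝ),
      μ < -(s : ℝ) := by
  set p := (s + 1) * (s - 1) ^ 2 + 1 with hp_def
  have hs_one : (1 : ℝ) ≤ s := by exact_mod_cast hs
  have hp : (p : ℝ) = (s + 1) * (s - 1) ^ 2 + 1 := by
    rw [hp_def]; push_cast [Nat.cast_sub hs]; ring
  obtain ⟨a, b, c, habc⟩ := exists_rayleigh_lt_neg hs_one hp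
  refine ((coneWithPendant s p).isHermitian_adjMatrix ℝ)
    |>.exists_mem_spectrum_lt_of_dotProduct_mulVec_lt (coneTestVec s p a b c) ?_
  rwa [coneTestVec_dotProduct_adjMatrix_mulVec, coneTestVec_dotProduct_self]
end

section
/- Let G be a finite simple graph and let 𝔠 be a set of cliques of G such that: (i) every edge of G is contained in some member of 𝔠; (ii) every vertex of G is contained in at most three members of 𝔠; (iii) whenever two distinct members C, C′ of 𝔠 contain two common distinct vertices u and v, then C and C′ are the only members of 𝔠 containing u, they are the only members of 𝔠 containing v, and C ∩ C′ = {u, v}. Then every pair of distinct non-adjacent vertices of G has at most 18 common neighbors; if moreover G is regular, then every pair of distinct non-adjacent vertices of G has at most 12 common neighbors. -/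
open Finset

set_option linter.unusedSectionVars false
set_option maxHeartbeats 1000000

section Aux
variable {V : Type*} [Fintype V] [DecidableEq V]
    {G : SimpleGraph V} [DecidableRel G.Adj]
    {𝔠 : Finset (Finset V)}

lemma cell_le_two
    (hinter : ∀ C ∈ 𝔠, ∀ C' ∈ 𝔠, C ≠ C' → ∀ u v : V, u ≠ v →
      u ∈ C → u ∈ C' → v ∈ C → v ∈ C' →
        (∀ D ∈ 𝔠, u ∈ D → D = C ∨ D = C') ∧
        (∀ D ∈ 𝔠, v ∈ D → D = C ∨ D = C') ∧
        C ∩ C' = {u, v})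
    {C D : Finset V} (hC : C ∈ 𝔠) (hD : D ∈ 𝔠) (hCD : C ≠ D) :
    (C ∩ D).card ≤ 2 := by
  by_contra h
  push_neg at h
  obtain ⟨x, y, z, hx, hy, hz, hxy, hxz, hyz⟩ := Finset.two_lt_card_iff.mp h
  obtain ⟨-, -, h3⟩ := hinter C hC D hD hCD x y hxy (mem_inter.1 hx).1 (mem_inter.1 hx).2
    (mem_inter.1 hy).1 (mem_inter.1 hy).2
  rw [h3] at hz
  simp only [mem_insert, mem_singleton] at hz
  rcases hz with rfl | rfl
  · exact hxz rfl
  · exact hyz rfl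

lemma thick_eq
    (hclique : ∀ C ∈ 𝔠, G.IsClique (C : Set V))
    (hedge : ∀ u v : V, G.Adj u v → ∃ C ∈ 𝔠, u ∈ C ∧ v ∈ C)
    (hinter : ∀ C ∈ 𝔠, ∀ C' ∈ 𝔠, C ≠ C' → ∀ u v : V, u ≠ v →
      u ∈ C → u ∈ C' → v ∈ C → v ∈ C' →
        (∀ D ∈ 𝔠, u ∈ D → D = C ∨ D = C') ∧
        (∀ D ∈ 𝔠, v ∈ D → D = C ∨ D = C') ∧
        C ∩ C' = {u, v})
    {k : ℕ} (hreg : G.IsRegularOfDegree k)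
    {C D : Finset V} (hC : C ∈ 𝔠) (hD : D ∈ 𝔠) (hCD : C ≠ D)
    {w x : V} (hw : w ∈ C ∩ D) (hx : x ∈ C ∩ D) (hwx : w ≠ x) :
    k + 3 = C.card + D.card := by
  obtain ⟨hwC, hwD⟩ := mem_inter.1 hw
  obtain ⟨hxC, hxD⟩ := mem_inter.1 hx
  obtain ⟨h1, -, h3⟩ := hinter C hC D hD hCD w x hwx hwC hwD hxC hxD
  have hN : G.neighborFinset w = (C ∪ D).erase w := by
    ext y
    simp only [SimpleGraph.mem_neighborFinset, mem_erase, mem_union]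
    constructor
    · intro hadj
      obtain ⟨E, hE, hwE, hyE⟩ := hedge w y hadj
      refine ⟨(G.ne_of_adj hadj).symm, ?_⟩
      rcases h1 E hE hwE with rfl | rfl
      · exact Or.inl hyE
      · exact Or.inr hyE
    · rintro ⟨hyw, hyCD⟩
      rcases hyCD with hyC | hyD
      · exact hclique C hC hwC hyC (Ne.symm hyw)
      · exact hclique D hD hwD hyD (Ne.symm hyw)
  have hk : k = ((C ∪ D).erase w).card := by
    rw [← hN]; exact (hreg w).symm
  have hwCD : w ∈ C ∪ D := mem_union_left _ hwC
  have he : ((C ∪ D).erase w).card + 1 = (C ∪ D).card := by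
    rw [card_erase_of_mem hwCD]
    have : 1 ≤ (C ∪ D).card := card_pos.2 ⟨w, hwCD⟩
    omega
  have hcui : (C ∪ D).card + (C ∩ D).card = C.card + D.card :=
    card_union_add_card_inter C D
  have hi : (C ∩ D).card = 2 := by
    rw [h3, card_insert_of_notMem (by simp [hwx]), card_singleton]
  omega

lemma deg_three
    (hclique : ∀ C ∈ 𝔠, G.IsClique (C : Set V))
    (hedge : ∀ u v : V, G.Adj u v → ∃ C ∈ 𝔠, u ∈ C ∧ v ∈ C)
    (hthree : ∀ v : V, (𝔠.filter (fun C => v ∈ C)).card ≤ 3)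
    (hinter : ∀ C ∈ 𝔠, ∀ C' ∈ 𝔠, C ≠ C' → ∀ u v : V, u ≠ v →
      u ∈ C → u ∈ C' → v ∈ C → v ∈ C' →
        (∀ D ∈ 𝔠, u ∈ D → D = C ∨ D = C') ∧
        (∀ D ∈ 𝔠, v ∈ D → D = C ∨ D = C') ∧
        C ∩ C' = {u, v})
    {k : ℕ} (hreg : G.IsRegularOfDegree k)
    {z : V} {E1 E2 E3 : Finset V}
    (h1 : E1 ∈ 𝔠) (h2 : E2 ∈ 𝔠) (h3 : E3 ∈ 𝔠)
    (hz1 : z ∈ E1) (hz2 : z ∈ E2) (hz3 : z ∈ E3)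
    (h12 : E1 ≠ E2) (h13 : E1 ≠ E3) (h23 : E2 ≠ E3) :
    k + 3 = E1.card + E2.card + E3.card := by
  have hmem : ∀ E ∈ 𝔠, z ∈ E → E = E1 ∨ E = E2 ∨ E = E3 := by
    intro E hE hzE
    by_contra hcon
    push_neg at hcon
    obtain ⟨hne1, hne2, hne3⟩ := hcon
    have hsub : ({E1, E2, E3} : Finset (Finset V)) ⊆ 𝔠.filter (fun C => z ∈ C) := by
      intro F hF
      simp only [mem_insert, mem_singleton] at hF
      rcases hF with rfl | rfl | rfl <;> simp [mem_filter, h1, h2, h3, hz1, hz2, hz3]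
    have hcard : ({E1, E2, E3} : Finset (Finset V)).card = 3 := by
      rw [card_insert_of_notMem (by simp [h12, h13]),
        card_insert_of_notMem (by simp [h23]), card_singleton]
    have heq : ({E1, E2, E3} : Finset (Finset V)) = 𝔠.filter (fun C => z ∈ C) :=
      eq_of_subset_of_card_le hsub (by rw [hcard]; exact hthree z)
    have hEmem : E ∈ ({E1, E2, E3} : Finset (Finset V)) := by
      rw [heq]; simp [mem_filter, hE, hzE]
    simp only [mem_insert, mem_singleton] at hEmem
    tauto
  have hpair : ∀ {A B F : Finset V}, A ∈ 𝔠 → B ∈ 𝔠 → F ∈ 𝔠 → A ≠ B → A ≠ F → B ≠ F →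
      z ∈ A → z ∈ B → z ∈ F → A ∩ B = {z} := by
    intro A B F hA hB hF hAB hAF hBF hzA hzB hzF
    apply Finset.Subset.antisymm
    · intro y hy
      obtain ⟨hyA, hyB⟩ := mem_inter.1 hy
      simp only [mem_singleton]
      by_contra hyz
      obtain ⟨hall, -, -⟩ := hinter A hA B hB hAB z y (Ne.symm hyz) hzA hzB hyA hyB
      rcases hall F hF hzF with rfl | rfl
      · exact hAF rfl
      · exact hBF rfl
    · simp [mem_inter, hzA, hzB]
  have h12' : E1 ∩ E2 = {z} := hpair h1 h2 h3 h12 h13 h23 hz1 hz2 hz3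
  have h13' : E1 ∩ E3 = {z} := hpair h1 h3 h2 h13 h12 (Ne.symm h23) hz1 hz3 hz2
  have h23' : E2 ∩ E3 = {z} := hpair h2 h3 h1 h23 (Ne.symm h12) (Ne.symm h13) hz2 hz3 hz1
  have hN : G.neighborFinset z = (E1 ∪ E2 ∪ E3).erase z := by
    ext y
    simp only [SimpleGraph.mem_neighborFinset, mem_erase, mem_union]
    constructor
    · intro hadj
      obtain ⟨E, hE, hzE, hyE⟩ := hedge z y hadj
      refine ⟨(G.ne_of_adj hadj).symm, ?_⟩
      rcases hmem E hE hzE with rfl | rfl | rfl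
      · exact Or.inl (Or.inl hyE)
      · exact Or.inl (Or.inr hyE)
      · exact Or.inr hyE
    · rintro ⟨hyz, hyE⟩
      rcases hyE with (hy | hy) | hy
      · exact hclique E1 h1 hz1 hy (Ne.symm hyz)
      · exact hclique E2 h2 hz2 hy (Ne.symm hyz)
      · exact hclique E3 h3 hz3 hy (Ne.symm hyz)
  have hk : k = ((E1 ∪ E2 ∪ E3).erase z).card := by
    rw [← hN]; exact (hreg z).symm
  have hzU : z ∈ E1 ∪ E2 ∪ E3 := mem_union_left _ (mem_union_left _ hz1)
  have he : ((E1 ∪ E2 ∪ E3).erase z).card + 1 = (E1 ∪ E2 ∪ E3).card := by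
    rw [card_erase_of_mem hzU]
    have : 1 ≤ (E1 ∪ E2 ∪ E3).card := card_pos.2 ⟨z, hzU⟩
    omega
  have hu1 : (E1 ∪ E2).card + (E1 ∩ E2).card = E1.card + E2.card :=
    card_union_add_card_inter E1 E2
  have hu2 : (E1 ∪ E2 ∪ E3).card + ((E1 ∪ E2) ∩ E3).card = (E1 ∪ E2).card + E3.card :=
    card_union_add_card_inter (E1 ∪ E2) E3
  have hi2 : (E1 ∪ E2) ∩ E3 = {z} := by
    rw [union_inter_distrib_right, h13', h23', union_self]
  rw [h12'] at hu1
  rw [hi2] at hu2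
  simp only [card_singleton] at hu1 hu2
  omega

lemma arith_core (k c1 d1 d2 d3 a1 a2 a3 ds n1 n2 n3 m1 m2 m3 : ℕ)
    (e1 : k + 3 = d1 + d2 + d3) (e2 : k + 3 = a1 + a2 + a3)
    (R1 : 2 ≤ n1 → k + 3 = c1 + d1 ∧ 3 ≤ c1 ∧ 3 ≤ d1)
    (R2 : 2 ≤ n2 → k + 3 = c1 + d2 ∧ 3 ≤ c1 ∧ 3 ≤ d2)
    (R3 : 2 ≤ n3 → k + 3 = c1 + d3 ∧ 3 ≤ c1 ∧ 3 ≤ d3)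
    (N1 : 1 ≤ n1 → 2 ≤ d1) (N2 : 1 ≤ n2 → 2 ≤ d2) (N3 : 1 ≤ n3 → 2 ≤ d3)
    (M1 : 2 ≤ m1 → k + 3 = a1 + ds ∧ 3 ≤ a1 ∧ 3 ≤ ds)
    (M2 : 2 ≤ m2 → k + 3 = a2 + ds ∧ 3 ≤ a2 ∧ 3 ≤ ds)
    (M3 : 2 ≤ m3 → k + 3 = a3 + ds ∧ 3 ≤ a3 ∧ 3 ≤ ds)
    (b1 : n1 ≤ 2) (b2 : n2 ≤ 2) (b3 : n3 ≤ 2)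
    (b4 : m1 ≤ 2) (b5 : m2 ≤ 2) (b6 : m3 ≤ 2)
    (hs1 : 5 ≤ n1 + n2 + n3) (hs2 : 5 ≤ m1 + m2 + m3)
    (p1 : 1 ≤ a1) (p2 : 1 ≤ a2) (p3 : 1 ≤ a3)
    (hds : ds = d1 ∨ ds = d2 ∨ ds = d3)
    (hc1 : c1 = a1 ∨ c1 = a2 ∨ c1 = a3) : False := by
  omega

lemma regular_bound
    (hclique : ∀ C ∈ 𝔠, G.IsClique (C : Set V))
    (hedge : ∀ u v : V, G.Adj u v → ∃ C ∈ 𝔠, u ∈ C ∧ v ∈ C)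
    (hthree : ∀ v : V, (𝔠.filter (fun C => v ∈ C)).card ≤ 3)
    (hinter : ∀ C ∈ 𝔠, ∀ C' ∈ 𝔠, C ≠ C' → ∀ u v : V, u ≠ v →
      u ∈ C → u ∈ C' → v ∈ C → v ∈ C' →
        (∀ D ∈ 𝔠, u ∈ D → D = C ∨ D = C') ∧
        (∀ D ∈ 𝔠, v ∈ D → D = C ∨ D = C') ∧
        C ∩ C' = {u, v})
    {k : ℕ} (hreg : G.IsRegularOfDegree k)
    {u v : V} (hne : u ≠ v) (hnadj : ¬ G.Adj u v) :
    ((G.neighborFinset u) ∩ (G.neighborFinset v)).card ≤ 12 := by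
  by_contra hlt
  push_neg at hlt
  set S : Finset V := (G.neighborFinset u) ∩ (G.neighborFinset v) with hSdef
  set Cu : Finset (Finset V) := 𝔠.filter (fun C => u ∈ C) with hCudef
  set Dv : Finset (Finset V) := 𝔠.filter (fun C => v ∈ C) with hDvdef
  have hSmem : ∀ w ∈ S, G.Adj u w ∧ G.Adj v w := by
    intro w hw
    rw [hSdef, mem_inter, SimpleGraph.mem_neighborFinset, SimpleGraph.mem_neighborFinset] at hw
    exact hw
  have hvnot : ∀ C ∈ Cu, v ∉ C := by
    intro C hC hv
    obtain ⟨hC𝔠, huC⟩ := mem_filter.1 hC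
    exact hnadj (hclique C hC𝔠 huC hv hne)
  have hunot : ∀ D ∈ Dv, u ∉ D := by
    intro D hD hu
    obtain ⟨hD𝔠, hvD⟩ := mem_filter.1 hD
    exact hnadj (hclique D hD𝔠 hu hvD hne)
  have hCuDv : ∀ C ∈ Cu, ∀ D ∈ Dv, C ≠ D := by
    intro C hC D hD h
    exact hunot D hD (h ▸ (mem_filter.1 hC).2)
  have hSC : ∀ w ∈ S, ∃ C ∈ Cu, w ∈ C := by
    intro w hw
    obtain ⟨C, hC, huC, hwC⟩ := hedge u w (hSmem w hw).1
    exact ⟨C, mem_filter.2 ⟨hC, huC⟩, hwC⟩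
  have hSD : ∀ w ∈ S, ∃ D ∈ Dv, w ∈ D := by
    intro w hw
    obtain ⟨D, hD, hvD, hwD⟩ := hedge v w (hSmem w hw).2
    exact ⟨D, mem_filter.2 ⟨hD, hvD⟩, hwD⟩
  have hCu3 : Cu.card ≤ 3 := hthree u
  have hDv3 : Dv.card ≤ 3 := hthree v
  -- cell bound
  have hcell : ∀ C ∈ Cu, ∀ D ∈ Dv, (C ∩ D ∩ S).card ≤ 2 := by
    intro C hC D hD
    exact le_trans (card_le_card inter_subset_left)
      (cell_le_two hinter (mem_filter.1 hC).1 (mem_filter.1 hD).1 (hCuDv C hC D hD))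
  -- pigeonhole: a big row and a big column
  have hrow : ∃ C ∈ Cu, 5 ≤ (C ∩ S).card := by
    by_contra h
    push_neg at h
    have hsub : S ⊆ Cu.biUnion (fun C => C ∩ S) := by
      intro w hw
      obtain ⟨C, hC, hwC⟩ := hSC w hw
      exact mem_biUnion.2 ⟨C, hC, mem_inter.2 ⟨hwC, hw⟩⟩
    have h1 : S.card ≤ ∑ C ∈ Cu, (C ∩ S).card :=
      le_trans (card_le_card hsub) card_biUnion_le
    have h2 : ∑ C ∈ Cu, (C ∩ S).card ≤ ∑ _C ∈ Cu, 4 :=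
      sum_le_sum (fun C hC => by have := h C hC; omega)
    have h3 : ∑ _C ∈ Cu, (4 : ℕ) = Cu.card * 4 := by
      rw [sum_const, smul_eq_mul]
    omega
  have hcol : ∃ D ∈ Dv, 5 ≤ (D ∩ S).card := by
    by_contra h
    push_neg at h
    have hsub : S ⊆ Dv.biUnion (fun D => D ∩ S) := by
      intro w hw
      obtain ⟨D, hD, hwD⟩ := hSD w hw
      exact mem_biUnion.2 ⟨D, hD, mem_inter.2 ⟨hwD, hw⟩⟩
    have h1 : S.card ≤ ∑ D ∈ Dv, (D ∩ S).card :=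
      le_trans (card_le_card hsub) card_biUnion_le
    have h2 : ∑ D ∈ Dv, (D ∩ S).card ≤ ∑ _D ∈ Dv, 4 :=
      sum_le_sum (fun D hD => by have := h D hD; omega)
    have h3 : ∑ _D ∈ Dv, (4 : ℕ) = Dv.card * 4 := by
      rw [sum_const, smul_eq_mul]
    omega
  obtain ⟨C1, hC1, hC1card⟩ := hrow
  obtain ⟨Ds, hDs, hDscard⟩ := hcol
  -- row decomposition
  have hrowsum : 5 ≤ ∑ D ∈ Dv, (C1 ∩ D ∩ S).card := by
    have hsub : C1 ∩ S ⊆ Dv.biUnion (fun D => C1 ∩ D ∩ S) := by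
      intro w hw
      obtain ⟨hwC1, hwS⟩ := mem_inter.1 hw
      obtain ⟨D, hD, hwD⟩ := hSD w hwS
      exact mem_biUnion.2 ⟨D, hD, mem_inter.2 ⟨mem_inter.2 ⟨hwC1, hwD⟩, hwS⟩⟩
    exact le_trans hC1card (le_trans (card_le_card hsub) card_biUnion_le)
  have hDveq3 : Dv.card = 3 := by
    have h2 : ∑ D ∈ Dv, (C1 ∩ D ∩ S).card ≤ ∑ _D ∈ Dv, 2 :=
      sum_le_sum (fun D hD => hcell C1 hC1 D hD)
    have h3 : ∑ _D ∈ Dv, (2 : ℕ) = Dv.card * 2 := by rw [sum_const, smul_eq_mul]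
    omega
  obtain ⟨D1, D2, D3, hd12, hd13, hd23, hDveq⟩ := card_eq_three.mp hDveq3
  have hD1 : D1 ∈ Dv := by rw [hDveq]; simp
  have hD2 : D2 ∈ Dv := by rw [hDveq]; simp
  have hD3 : D3 ∈ Dv := by rw [hDveq]; simp
  have hrowsum' : 5 ≤ (C1 ∩ D1 ∩ S).card + (C1 ∩ D2 ∩ S).card + (C1 ∩ D3 ∩ S).card := by
    have : ∑ D ∈ Dv, (C1 ∩ D ∩ S).card
        = (C1 ∩ D1 ∩ S).card + ((C1 ∩ D2 ∩ S).card + (C1 ∩ D3 ∩ S).card) := by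
      rw [hDveq, sum_insert (by simp [hd12, hd13]), sum_pair hd23]
    omega
  -- column decomposition
  have hcolsum : 5 ≤ ∑ C ∈ Cu, (C ∩ Ds ∩ S).card := by
    have hsub : Ds ∩ S ⊆ Cu.biUnion (fun C => C ∩ Ds ∩ S) := by
      intro w hw
      obtain ⟨hwDs, hwS⟩ := mem_inter.1 hw
      obtain ⟨C, hC, hwC⟩ := hSC w hwS
      exact mem_biUnion.2 ⟨C, hC, mem_inter.2 ⟨mem_inter.2 ⟨hwC, hwDs⟩, hwS⟩⟩
    exact le_trans hDscard (le_trans (card_le_card hsub) card_biUnion_le)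
  have hCueq3 : Cu.card = 3 := by
    have h2 : ∑ C ∈ Cu, (C ∩ Ds ∩ S).card ≤ ∑ _C ∈ Cu, 2 :=
      sum_le_sum (fun C hC => hcell C hC Ds hDs)
    have h3 : ∑ _C ∈ Cu, (2 : ℕ) = Cu.card * 2 := by rw [sum_const, smul_eq_mul]
    omega
  obtain ⟨A1, A2, A3, ha12, ha13, ha23, hCueq⟩ := card_eq_three.mp hCueq3
  have hA1 : A1 ∈ Cu := by rw [hCueq]; simp
  have hA2 : A2 ∈ Cu := by rw [hCueq]; simp
  have hA3 : A3 ∈ Cu := by rw [hCueq]; simp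
  have hcolsum' : 5 ≤ (A1 ∩ Ds ∩ S).card + (A2 ∩ Ds ∩ S).card + (A3 ∩ Ds ∩ S).card := by
    have : ∑ C ∈ Cu, (C ∩ Ds ∩ S).card
        = (A1 ∩ Ds ∩ S).card + ((A2 ∩ Ds ∩ S).card + (A3 ∩ Ds ∩ S).card) := by
      rw [hCueq, sum_insert (by simp [ha12, ha13]), sum_pair ha23]
    omega
  -- thick cell facts
  have hthick : ∀ C ∈ Cu, ∀ D ∈ Dv, 2 ≤ (C ∩ D ∩ S).card →
      k + 3 = C.card + D.card ∧ 3 ≤ C.card ∧ 3 ≤ D.card := by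
    intro C hC D hD h2
    obtain ⟨w, hw, x, hx, hwx⟩ := Finset.one_lt_card.mp h2
    obtain ⟨hwCD, hwS⟩ := mem_inter.1 hw
    obtain ⟨hxCD, hxS⟩ := mem_inter.1 hx
    have heq := thick_eq hclique hedge hinter hreg (mem_filter.1 hC).1 (mem_filter.1 hD).1
      (hCuDv C hC D hD) hwCD hxCD hwx
    have huw : u ≠ w := fun h => G.irrefl (h ▸ (hSmem w hwS).1)
    have hux : u ≠ x := fun h => G.irrefl (h ▸ (hSmem x hxS).1)
    have hvw : v ≠ w := fun h => G.irrefl (h ▸ (hSmem w hwS).2)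
    have hvx : v ≠ x := fun h => G.irrefl (h ▸ (hSmem x hxS).2)
    have hCsub : ({u, w, x} : Finset V) ⊆ C := by
      intro y hy
      simp only [mem_insert, mem_singleton] at hy
      rcases hy with rfl | rfl | rfl
      · exact (mem_filter.1 hC).2
      · exact (mem_inter.1 hwCD).1
      · exact (mem_inter.1 hxCD).1
    have hDsub : ({v, w, x} : Finset V) ⊆ D := by
      intro y hy
      simp only [mem_insert, mem_singleton] at hy
      rcases hy with rfl | rfl | rfl
      · exact (mem_filter.1 hD).2
      · exact (mem_inter.1 hwCD).2
      · exact (mem_inter.1 hxCD).2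
    have hc3 : ({u, w, x} : Finset V).card = 3 := by
      rw [card_insert_of_notMem (by simp [huw, hux]), card_pair hwx]
    have hd3 : ({v, w, x} : Finset V).card = 3 := by
      rw [card_insert_of_notMem (by simp [hvw, hvx]), card_pair hwx]
    exact ⟨heq, hc3 ▸ card_le_card hCsub, hd3 ▸ card_le_card hDsub⟩
  -- nonempty cell gives D.card ≥ 2
  have hnonemp : ∀ D ∈ Dv, ∀ C ∈ Cu, 1 ≤ (C ∩ D ∩ S).card → 2 ≤ D.card := by
    intro D hD C hC h1
    obtain ⟨y, hy⟩ := card_pos.1 h1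
    obtain ⟨hyCD, hyS⟩ := mem_inter.1 hy
    have hvy : v ≠ y := fun h => G.irrefl (h ▸ (hSmem y hyS).2)
    have hsub : ({v, y} : Finset V) ⊆ D := by
      intro z hz
      simp only [mem_insert, mem_singleton] at hz
      rcases hz with rfl | rfl
      · exact (mem_filter.1 hD).2
      · exact (mem_inter.1 hyCD).2
    calc 2 = ({v, y} : Finset V).card := (card_pair hvy).symm
      _ ≤ D.card := card_le_card hsub
  -- global degree equations
  have e1 : k + 3 = D1.card + D2.card + D3.card :=
    deg_three hclique hedge hthree hinter hreg (mem_filter.1 hD1).1 (mem_filter.1 hD2).1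
      (mem_filter.1 hD3).1 (mem_filter.1 hD1).2 (mem_filter.1 hD2).2 (mem_filter.1 hD3).2
      hd12 hd13 hd23
  have e2 : k + 3 = A1.card + A2.card + A3.card :=
    deg_three hclique hedge hthree hinter hreg (mem_filter.1 hA1).1 (mem_filter.1 hA2).1
      (mem_filter.1 hA3).1 (mem_filter.1 hA1).2 (mem_filter.1 hA2).2 (mem_filter.1 hA3).2
      ha12 ha13 ha23
  -- implications for omega
  have R1 := hthick C1 hC1 D1 hD1
  have R2 := hthick C1 hC1 D2 hD2
  have R3 := hthick C1 hC1 D3 hD3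
  have N1 := hnonemp D1 hD1 C1 hC1
  have N2 := hnonemp D2 hD2 C1 hC1
  have N3 := hnonemp D3 hD3 C1 hC1
  have M1 := hthick A1 hA1 Ds hDs
  have M2 := hthick A2 hA2 Ds hDs
  have M3 := hthick A3 hA3 Ds hDs
  have b1 := hcell C1 hC1 D1 hD1
  have b2 := hcell C1 hC1 D2 hD2
  have b3 := hcell C1 hC1 D3 hD3
  have b4 := hcell A1 hA1 Ds hDs
  have b5 := hcell A2 hA2 Ds hDs
  have b6 := hcell A3 hA3 Ds hDs
  have p1 : 1 ≤ A1.card := card_pos.2 ⟨u, (mem_filter.1 hA1).2⟩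
  have p2 : 1 ≤ A2.card := card_pos.2 ⟨u, (mem_filter.1 hA2).2⟩
  have p3 : 1 ≤ A3.card := card_pos.2 ⟨u, (mem_filter.1 hA3).2⟩
  have hdsmem : Ds = D1 ∨ Ds = D2 ∨ Ds = D3 := by
    have := hDs; rw [hDveq] at this
    simpa using this
  have hc1mem : C1 = A1 ∨ C1 = A2 ∨ C1 = A3 := by
    have := hC1; rw [hCueq] at this
    simpa using this
  have hds' : Ds.card = D1.card ∨ Ds.card = D2.card ∨ Ds.card = D3.card := by
    rcases hdsmem with rfl | rfl | rfl
    · exact Or.inl rfl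
    · exact Or.inr (Or.inl rfl)
    · exact Or.inr (Or.inr rfl)
  have hc1' : C1.card = A1.card ∨ C1.card = A2.card ∨ C1.card = A3.card := by
    rcases hc1mem with rfl | rfl | rfl
    · exact Or.inl rfl
    · exact Or.inr (Or.inl rfl)
    · exact Or.inr (Or.inr rfl)
  exact arith_core k C1.card D1.card D2.card D3.card A1.card A2.card A3.card Ds.card
    (C1 ∩ D1 ∩ S).card (C1 ∩ D2 ∩ S).card (C1 ∩ D3 ∩ S).card
    (A1 ∩ Ds ∩ S).card (A2 ∩ Ds ∩ S).card (A3 ∩ Ds ∩ S).card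
    e1 e2 R1 R2 R3 N1 N2 N3 M1 M2 M3 b1 b2 b3 b4 b5 b6 hrowsum' hcolsum' p1 p2 p3 hds' hc1'

end Aux

theorem statement10 {V : Type*} [Fintype V] [DecidableEq V]
    (G : SimpleGraph V) [DecidableRel G.Adj]
    (𝔠 : Finset (Finset V))
    (hclique : ∀ C ∈ 𝔠, G.IsClique (C : Set V))
    (hedge : ∀ u v : V, G.Adj u v → ∃ C ∈ 𝔠, u ∈ C ∧ v ∈ C)
    (hthree : ∀ v : V, (𝔠.filter (fun C => v ∈ C)).card ≤ 3)
    (hinter : ∀ C ∈ 𝔠, ∀ C' ∈ 𝔠, C ≠ C' → ∀ u v : V, u ≠ v →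
      u ∈ C → u ∈ C' → v ∈ C → v ∈ C' →
        (∀ D ∈ 𝔠, u ∈ D → D = C ∨ D = C') ∧
        (∀ D ∈ 𝔠, v ∈ D → D = C ∨ D = C') ∧
        C ∩ C' = {u, v}) :
    (∀ u v : V, u ≠ v → ¬ G.Adj u v →
      ((G.neighborFinset u) ∩ (G.neighborFinset v)).card ≤ 18) ∧
    ((∃ k, G.IsRegularOfDegree k) →
      ∀ u v : V, u ≠ v → ¬ G.Adj u v →
        ((G.neighborFinset u) ∩ (G.neighborFinset v)).card ≤ 12) := by
  constructor
  · intro u v hne hnadj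
    set S : Finset V := (G.neighborFinset u) ∩ (G.neighborFinset v) with hSdef
    set Cu : Finset (Finset V) := 𝔠.filter (fun C => u ∈ C) with hCudef
    set Dv : Finset (Finset V) := 𝔠.filter (fun C => v ∈ C) with hDvdef
    have hSmem : ∀ w ∈ S, G.Adj u w ∧ G.Adj v w := by
      intro w hw
      rw [hSdef, mem_inter, SimpleGraph.mem_neighborFinset,
        SimpleGraph.mem_neighborFinset] at hw
      exact hw
    have hsub : S ⊆ (Cu ×ˢ Dv).biUnion (fun p => p.1 ∩ p.2) := by
      intro w hw
      obtain ⟨C, hC, huC, hwC⟩ := hedge u w (hSmem w hw).1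
      obtain ⟨D, hD, hvD, hwD⟩ := hedge v w (hSmem w hw).2
      refine mem_biUnion.2 ⟨(C, D), ?_, mem_inter.2 ⟨hwC, hwD⟩⟩
      exact mem_product.2 ⟨mem_filter.2 ⟨hC, huC⟩, mem_filter.2 ⟨hD, hvD⟩⟩
    have h1 : S.card ≤ ∑ p ∈ Cu ×ˢ Dv, (p.1 ∩ p.2).card :=
      (card_le_card hsub).trans card_biUnion_le
    have h2 : ∑ p ∈ Cu ×ˢ Dv, (p.1 ∩ p.2).card ≤ ∑ _p ∈ Cu ×ˢ Dv, 2 := by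
      refine sum_le_sum ?_
      rintro ⟨C, D⟩ hp
      obtain ⟨hC, hD⟩ := mem_product.1 hp
      have hCD : C ≠ D := by
        intro h
        exact hnadj (hclique D (mem_filter.1 hD).1 (h ▸ (mem_filter.1 hC).2)
          (mem_filter.1 hD).2 hne)
      exact cell_le_two hinter (mem_filter.1 hC).1 (mem_filter.1 hD).1 hCD
    have h3 : ∑ _p ∈ Cu ×ˢ Dv, (2 : ℕ) = (Cu ×ˢ Dv).card * 2 := by
      rw [sum_const, smul_eq_mul]
    have h4 : (Cu ×ˢ Dv).card = Cu.card * Dv.card := card_product Cu Dv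
    have h5 : Cu.card ≤ 3 := hthree u
    have h6 : Dv.card ≤ 3 := hthree v
    have h7 : Cu.card * Dv.card ≤ 9 := le_trans (Nat.mul_le_mul_left _ h6)
      (by omega)
    omega
  · rintro ⟨k, hreg⟩ u v hne hnadj
    exact regular_bound hclique hedge hthree hinter hreg hne hnadj
end

section
/- Let G be a finite simple regular graph with at least one vertex, and let 𝔠 be a set of cliques of G such that: (i) every edge of G is contained in some member of 𝔠; (ii) every vertex of G is contained in at most three members of 𝔠; (iii) whenever two distinct members C, C′ of 𝔠 contain two common distinct vertices u and v, then C and C′ are the only members of 𝔠 containing u, they are the only members of 𝔠 containing v, and C ∩ C′ = {u, v}. Then there exists a vertex u of G such that every vertex v non-adjacent to u and distinct from u satisfies |N(u) ∩ N(v)| ≤ 9, where N(x) denotes the set of neighbors of x. -/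
/-!
Since `𝔠` covers the edges by cliques, `N(x)` is the union of the members of `𝔠` through `x`,
minus `x`, and every common neighbour of `u` and `v` lies in some `C ∩ D` with `u ∈ C`, `v ∈ D`.

If distinct members of `𝔠` meet in at most one vertex, any `u` works: there are at most `3 · 3`
such pairs `(C, D)`, each contributing at most one vertex.

Otherwise two members `C ≠ D` share two vertices `u, w`, and `N(u) = (C ∪ D) \ {u}`. Regularity
turns every pair of members meeting in two points into `|C| + |D| = k + 3`, and a vertex on three
members, which then pairwise meet only in it, into `|E₁| + |E₂| + |E₃| = k + 3`. For `v` not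
adjacent to `u`, each member through `v` meets `C` and `D` in at most two points each, so ten
common neighbours need three members through `v` with incompatible sizes.
-/

open Finset

namespace SimpleGraph

variable {V : Type*} [DecidableEq V] {G : SimpleGraph V} {𝔠 : Finset (Finset V)}

def SharedEdgeRigid (𝔠 : Finset (Finset V)) : Prop :=
  ∀ C ∈ 𝔠, ∀ D ∈ 𝔠, C ≠ D → ∀ u v : V, u ≠ v → u ∈ C ∩ D → v ∈ C ∩ D →
    𝔠.filter (u ∈ ·) = {C, D} ∧ C ∩ D = {u, v}

theorem sharedEdgeRigid_of_forall_eq_or_eq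
    (hinter : ∀ C ∈ 𝔠, ∀ C' ∈ 𝔠, C ≠ C' → ∀ u v : V, u ≠ v →
      u ∈ C → u ∈ C' → v ∈ C → v ∈ C' →
        (∀ D ∈ 𝔠, u ∈ D → D = C ∨ D = C') ∧
        (∀ D ∈ 𝔠, v ∈ D → D = C ∨ D = C') ∧
        C ∩ C' = {u, v}) :
    SharedEdgeRigid 𝔠 := by
  intro C hC D hD hCD u v huv hu hv
  rw [mem_inter] at hu hv
  obtain ⟨honly, -, hCD_eq⟩ := hinter C hC D hD hCD u v huv hu.1 hu.2 hv.1 hv.2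
  refine ⟨?_, hCD_eq⟩
  ext E
  simp only [mem_filter, mem_insert, mem_singleton]
  constructor
  · exact fun ⟨hE, huE⟩ => honly E hE huE
  · rintro (rfl | rfl)
    exacts [⟨hC, hu.1⟩, ⟨hD, hu.2⟩]

theorem pairwise_inter_eq_singleton (hrigid : SharedEdgeRigid 𝔠) {x : V}
    (hx : 2 < #(𝔠.filter (x ∈ ·))) :
    (𝔠.filter (x ∈ ·) : Set (Finset V)).Pairwise (fun E E' => E ∩ E' = {x}) := by
  intro E hE E' hE' hEE'
  rw [mem_coe, mem_filter] at hE hE'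
  refine eq_singleton_iff_unique_mem.2 ⟨mem_inter.2 ⟨hE.2, hE'.2⟩, fun y hy => ?_⟩
  by_contra hyx
  obtain ⟨hfilter, -⟩ :=
    hrigid E hE.1 E' hE'.1 hEE' x y (Ne.symm hyx) (mem_inter.2 ⟨hE.2, hE'.2⟩) hy
  rw [hfilter] at hx
  exact (card_le_two.trans_lt hx).false

section Cover

variable [Fintype V] [DecidableRel G.Adj]

theorem neighborFinset_eq_biUnion_erase (hclique : ∀ C ∈ 𝔠, G.IsClique (C : Set V))
    (hedge : ∀ u v : V, G.Adj u v → ∃ C ∈ 𝔠, u ∈ C ∧ v ∈ C) (x : V) :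
    G.neighborFinset x = (𝔠.filter (x ∈ ·)).biUnion (·.erase x) := by
  ext y
  simp only [mem_neighborFinset, mem_biUnion, mem_filter, mem_erase]
  constructor
  · intro hxy
    obtain ⟨C, hC, hxC, hyC⟩ := hedge x y hxy
    exact ⟨C, ⟨hC, hxC⟩, hxy.ne.symm, hyC⟩
  · rintro ⟨C, ⟨hC, hxC⟩, hyx, hyC⟩
    exact hclique C hC hxC hyC hyx.symm

theorem card_neighborFinset_inter_le_sum
    (hedge : ∀ u v : V, G.Adj u v → ∃ C ∈ 𝔠, u ∈ C ∧ v ∈ C) (u v : V) :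
    #(G.neighborFinset u ∩ G.neighborFinset v) ≤
      ∑ p ∈ 𝔠.filter (u ∈ ·) ×ˢ 𝔠.filter (v ∈ ·), #(p.1 ∩ p.2) := by
  refine (card_le_card fun w hw => ?_).trans card_biUnion_le
  simp only [mem_inter, mem_neighborFinset] at hw
  obtain ⟨C, hC, huC, hwC⟩ := hedge u w hw.1
  obtain ⟨D, hD, hvD, hwD⟩ := hedge v w hw.2
  exact mem_biUnion.2 ⟨(C, D), mem_product.2 ⟨mem_filter.2 ⟨hC, huC⟩, mem_filter.2 ⟨hD, hvD⟩⟩,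
    mem_inter.2 ⟨hwC, hwD⟩⟩

theorem card_neighborFinset_inter_le_mul (hclique : ∀ C ∈ 𝔠, G.IsClique (C : Set V))
    (hedge : ∀ u v : V, G.Adj u v → ∃ C ∈ 𝔠, u ∈ C ∧ v ∈ C)
    (hsmall : ∀ C ∈ 𝔠, ∀ D ∈ 𝔠, C ≠ D → #(C ∩ D) ≤ 1)
    {u v : V} (huv : u ≠ v) (hnadj : ¬ G.Adj u v) :
    #(G.neighborFinset u ∩ G.neighborFinset v) ≤
      #(𝔠.filter (u ∈ ·)) * #(𝔠.filter (v ∈ ·)) := by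
  refine (card_neighborFinset_inter_le_sum hedge u v).trans ?_
  rw [← card_product, card_eq_sum_ones]
  refine sum_le_sum fun p hp => ?_
  simp only [mem_product, mem_filter] at hp
  obtain ⟨⟨hC, huC⟩, hD, hvD⟩ := hp
  refine hsmall _ hC _ hD fun hCD => hnadj ?_
  exact hclique _ hC huC (hCD ▸ hvD) huv

theorem degree_add_card_eq_sum_card (hclique : ∀ C ∈ 𝔠, G.IsClique (C : Set V))
    (hedge : ∀ u v : V, G.Adj u v → ∃ C ∈ 𝔠, u ∈ C ∧ v ∈ C) {x : V}
    (hpair : (𝔠.filter (x ∈ ·) : Set (Finset V)).Pairwise (fun E E' => E ∩ E' = {x})) :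
    G.degree x + #(𝔠.filter (x ∈ ·)) = ∑ E ∈ 𝔠.filter (x ∈ ·), #E := by
  have hdisj : (𝔠.filter (x ∈ ·) : Set (Finset V)).PairwiseDisjoint (·.erase x) := by
    intro E hE E' hE' hEE'
    rw [Function.onFun, disjoint_iff_inter_eq_empty, erase_inter, inter_erase, hpair hE hE' hEE',
      erase_singleton, erase_empty]
  rw [← card_neighborFinset_eq_degree, neighborFinset_eq_biUnion_erase hclique hedge,
    card_biUnion hdisj, card_eq_sum_ones, ← sum_add_distrib]
  exact sum_congr rfl fun E hE => card_erase_add_one (mem_filter.1 hE).2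

theorem card_inter_le_one_or_card_add_card_eq {k : ℕ} (hreg : G.IsRegularOfDegree k)
    (hclique : ∀ C ∈ 𝔠, G.IsClique (C : Set V))
    (hedge : ∀ u v : V, G.Adj u v → ∃ C ∈ 𝔠, u ∈ C ∧ v ∈ C) (hrigid : SharedEdgeRigid 𝔠)
    {C D : Finset V} (hC : C ∈ 𝔠) (hD : D ∈ 𝔠) (hCD : C ≠ D) :
    #(C ∩ D) ≤ 1 ∨ #(C ∩ D) = 2 ∧ #C + #D = k + 3 := by
  refine (le_or_gt #(C ∩ D) 1).imp_right fun h => ?_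
  obtain ⟨a, ha, b, hb, hab⟩ := one_lt_card.1 h
  obtain ⟨hfilter, hCD_eq⟩ := hrigid C hC D hD hCD a b hab ha hb
  have hnbr : G.neighborFinset a = (C ∪ D).erase a := by
    rw [neighborFinset_eq_biUnion_erase hclique hedge, hfilter, biUnion_insert,
      singleton_biUnion, erase_union_distrib]
  have hdeg := card_erase_add_one (mem_union_left D (mem_inter.1 ha).1)
  rw [← hnbr, card_neighborFinset_eq_degree, hreg a] at hdeg
  have hpair : #(C ∩ D) = 2 := by rw [hCD_eq, card_pair hab]
  have := card_union_add_card_inter C D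
  omega

theorem card_add_card_add_card_eq {k : ℕ} (hreg : G.IsRegularOfDegree k)
    (hclique : ∀ C ∈ 𝔠, G.IsClique (C : Set V))
    (hedge : ∀ u v : V, G.Adj u v → ∃ C ∈ 𝔠, u ∈ C ∧ v ∈ C) (hrigid : SharedEdgeRigid 𝔠)
    {x : V} {E₁ E₂ E₃ : Finset V} (hE : 𝔠.filter (x ∈ ·) = {E₁, E₂, E₃})
    (h12 : E₁ ≠ E₂) (h13 : E₁ ≠ E₃) (h23 : E₂ ≠ E₃) :
    #E₁ + #E₂ + #E₃ = k + 3 := by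
  have hcard : #(𝔠.filter (x ∈ ·)) = 3 := by
    rw [hE, card_eq_three]
    exact ⟨_, _, _, h12, h13, h23, rfl⟩
  have hsum := degree_add_card_eq_sum_card hclique hedge
    (pairwise_inter_eq_singleton hrigid (x := x) (by omega))
  rw [hreg x, hcard, hE, sum_insert (by simp [h12, h13]), sum_insert (by simp [h23]),
    sum_singleton] at hsum
  omega

theorem card_neighborFinset_inter_le_nine {k : ℕ} (hreg : G.IsRegularOfDegree k)
    (hclique : ∀ C ∈ 𝔠, G.IsClique (C : Set V))
    (hedge : ∀ u v : V, G.Adj u v → ∃ C ∈ 𝔠, u ∈ C ∧ v ∈ C)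
    (hthree : ∀ v : V, #(𝔠.filter (v ∈ ·)) ≤ 3) (hrigid : SharedEdgeRigid 𝔠)
    {C D : Finset V} (hC : C ∈ 𝔠) (hD : D ∈ 𝔠) (hCD : C ≠ D) {u w : V} (huw : u ≠ w)
    (hu : u ∈ C ∩ D) (hw : w ∈ C ∩ D) {v : V} (hvu : v ≠ u) (hnadj : ¬ G.Adj u v) :
    #(G.neighborFinset u ∩ G.neighborFinset v) ≤ 9 := by
  have hCD_card : #C + #D = k + 3 := by
    have := card_inter_le_one_or_card_add_card_eq hreg hclique hedge hrigid hC hD hCD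
    have := one_lt_card.2 ⟨u, hu, w, hw, huw⟩
    omega
  set 𝒟 := 𝔠.filter (v ∈ ·) with h𝒟
  have hbound := card_neighborFinset_inter_le_sum hedge u v
  rw [(hrigid C hC D hD hCD u w huw hu hw).1, ← h𝒟] at hbound
  simp only [sum_product, sum_pair hCD] at hbound
  have hinter : ∀ X ∈ 𝔠, v ∉ X → ∀ E ∈ 𝒟, #(X ∩ E) ≤ 1 ∨ #(X ∩ E) = 2 ∧ #X + #E = k + 3 :=
    fun X hX hvX E hE => card_inter_le_one_or_card_add_card_eq hreg hclique hedge hrigid hX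
      (mem_filter.1 hE).1 (ne_of_mem_of_not_mem' (mem_filter.1 hE).2 hvX).symm
  have hCE := hinter C hC fun h => hnadj (hclique C hC (mem_inter.1 hu).1 h hvu.symm)
  have hDE := hinter D hD fun h => hnadj (hclique D hD (mem_inter.1 hu).2 h hvu.symm)
  by_contra! h10
  have h𝒟3 : #𝒟 = 3 := by
    have hle : ∀ X, (∀ E ∈ 𝒟, #(X ∩ E) ≤ 1 ∨ #(X ∩ E) = 2 ∧ #X + #E = k + 3) →
        ∑ E ∈ 𝒟, #(X ∩ E) ≤ #𝒟 * 2 := fun X hX =>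
      sum_le_card_nsmul _ _ _ fun E hE => by have := hX E hE; omega
    have := hle C hCE
    have := hle D hDE
    have : #𝒟 ≤ 3 := hthree v
    omega
  obtain ⟨E₁, E₂, E₃, h12, h13, h23, hE⟩ := card_eq_three.1 h𝒟3
  have hsizes := card_add_card_add_card_eq hreg hclique hedge hrigid hE h12 h13 h23
  have hpos : ∀ E ∈ 𝒟, 0 < #E := fun E hE => card_pos.2 ⟨v, (mem_filter.1 hE).2⟩
  rw [hE] at hbound hCE hDE hpos
  simp only [mem_insert, mem_singleton, forall_eq_or_imp, forall_eq] at hCE hDE hpos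
  rw [sum_insert (by simp [h12, h13]), sum_insert (by simp [h23]), sum_singleton,
    sum_insert (by simp [h12, h13]), sum_insert (by simp [h23]), sum_singleton] at hbound
  -- Ten common neighbours force some `Eᵢ` to meet both `C` and `D` in two points, so that
  -- `2 #Eᵢ = 2 #C = 2 #D = k + 3`, and a second `Eⱼ` to meet `C` or `D` in two points, so that
  -- `2 #Eⱼ = k + 3` as well: nothing is left for the third clique through `v`.
  omega

end Cover

end SimpleGraph

theorem statement11 {V : Type*} [Fintype V] [DecidableEq V] [Nonempty V]
    (G : SimpleGraph V) [DecidableRel G.Adj]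
    (hreg : ∃ k, G.IsRegularOfDegree k)
    (𝔠 : Finset (Finset V))
    (hclique : ∀ C ∈ 𝔠, G.IsClique (C : Set V))
    (hedge : ∀ u v : V, G.Adj u v → ∃ C ∈ 𝔠, u ∈ C ∧ v ∈ C)
    (hthree : ∀ v : V, (𝔠.filter (fun C => v ∈ C)).card ≤ 3)
    (hinter : ∀ C ∈ 𝔠, ∀ C' ∈ 𝔠, C ≠ C' → ∀ u v : V, u ≠ v →
      u ∈ C → u ∈ C' → v ∈ C → v ∈ C' →
        (∀ D ∈ 𝔠, u ∈ D → D = C ∨ D = C') ∧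
        (∀ D ∈ 𝔠, v ∈ D → D = C ∨ D = C') ∧
        C ∩ C' = {u, v}) :
    ∃ u : V, ∀ v : V, v ≠ u → ¬ G.Adj u v →
      ((G.neighborFinset u) ∩ (G.neighborFinset v)).card ≤ 9 := by
  obtain ⟨k, hreg⟩ := hreg
  have hrigid := SimpleGraph.sharedEdgeRigid_of_forall_eq_or_eq hinter
  by_cases hsmall : ∀ C ∈ 𝔠, ∀ D ∈ 𝔠, C ≠ D → #(C ∩ D) ≤ 1
  · refine ⟨Classical.arbitrary V, fun v hvu hnadj => ?_⟩
    calc _ ≤ #(𝔠.filter (Classical.arbitrary V ∈ ·)) * #(𝔠.filter (v ∈ ·)) :=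
          SimpleGraph.card_neighborFinset_inter_le_mul hclique hedge hsmall hvu.symm hnadj
      _ ≤ 3 * 3 := Nat.mul_le_mul (hthree _) (hthree v)
  · push Not at hsmall
    obtain ⟨C, hC, D, hD, hCD, hCD_card⟩ := hsmall
    obtain ⟨u, hu, w, hw, huw⟩ := one_lt_card.1 hCD_card
    exact ⟨u, fun v hvu hnadj => SimpleGraph.card_neighborFinset_inter_le_nine hreg hclique
      hedge hthree hrigid hC hD hCD huw hu hw hvu hnadj⟩
end
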